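/- arXiv:1301.1751 — 11 statements merged into one kernel-verified Lean document; each statement's English description precedes it below -/
import Mathlib

section
/- Let d be the metric on Fin 4 with d(i,i) = 0, d(i,j) = 1 for distinct i, j ∈ {0,1,2}, and d(i,3) = d(3,i) = 1/2 for i ∈ {0,1,2}. Let A and B be probability vectors on Fin 4 with A(3) ≥ B(3). Then EMD_d(A, B) = (1/2)·(A(3) − B(3)) + ∑_{i ∈ {0,1,2} : A(i) ≥ B(i)} (A(i) − B(i)). -/
/-!
The metric `d4` is a star metric: `d4 i j = (w i + w j) / 2` for `i ≠ j`, with weights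
`w = (1, 1, 1, 0)` (the leaves `0, 1, 2` of a star sit at distance `1/2` from its centre `3`).
For a star metric the cost of any transport plan `f` from `X` to `Y` depends only on its
diagonal: it equals `(1/2) ∑ w i (X i + Y i - 2 f i i)`. Since `f i i ≤ min (X i) (Y i)`, the
cost is at least `(1/2) ∑ w i |X i - Y i|`, and this is attained by the plan that keeps the
common mass `min (X i) (Y i)` in place and distributes the excess of `X` over the deficit of
`Y` proportionally. The closed form follows from `|x| = 2 max x 0 - x` and
`∑_{i<3} (A i - B i) = B 3 - A 3`.
-/

open Finset

def IsProbVec {s : ℕ} (X : Fin s → ℝ) : Prop :=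
  (∀ i, 0 ≤ X i) ∧ ∑ i, X i = 1

noncomputable def EMD {s : ℕ} (d : Fin s → Fin s → ℝ) (X Y : Fin s → ℝ) : ℝ :=
  sInf { c : ℝ | ∃ f : Fin s → Fin s → ℝ,
    (∀ i j, 0 ≤ f i j) ∧ (∀ i, ∑ j, f i j = X i) ∧ (∀ j, ∑ i, f i j = Y j) ∧
    c = ∑ i, ∑ j, d i j * f i j }

/-- The metric on `Fin 4` with distance 1 between distinct points of `{0,1,2}`
and distance 1/2 between `3` and each of `0,1,2`. -/
noncomputable def d4 : Fin 4 → Fin 4 → ℝ := fun i j =>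
  if i = j then 0 else if i = 3 ∨ j = 3 then 1/2 else 1

section TransportPlan

variable {s : ℕ}

structure IsTransportPlan (X Y : Fin s → ℝ) (f : Fin s → Fin s → ℝ) : Prop where
  nonneg : ∀ i j, 0 ≤ f i j
  sum_row : ∀ i, ∑ j, f i j = X i
  sum_col : ∀ j, ∑ i, f i j = Y j

def transportCost (d f : Fin s → Fin s → ℝ) : ℝ := ∑ i, ∑ j, d i j * f i j

theorem EMD_eq_of_forall_le_of_exists {d : Fin s → Fin s → ℝ} {X Y : Fin s → ℝ} {v : ℝ}
    (hle : ∀ f, IsTransportPlan X Y f → v ≤ transportCost d f)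
    (hex : ∃ f, IsTransportPlan X Y f ∧ transportCost d f = v) :
    EMD d X Y = v := by
  refine IsLeast.csInf_eq ⟨?_, ?_⟩
  · obtain ⟨f, ⟨h0, hr, hc⟩, rfl⟩ := hex
    exact ⟨f, h0, hr, hc, rfl⟩
  · rintro c ⟨f, h0, hr, hc, rfl⟩
    exact hle f ⟨h0, hr, hc⟩

theorem IsTransportPlan.diag_le_min {X Y : Fin s → ℝ} {f : Fin s → Fin s → ℝ}
    (hf : IsTransportPlan X Y f) (i : Fin s) : f i i ≤ min (X i) (Y i) := by
  refine le_min ?_ ?_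
  · rw [← hf.sum_row i]
    exact single_le_sum (fun j _ => hf.nonneg i j) (mem_univ i)
  · rw [← hf.sum_col i]
    exact single_le_sum (fun j _ => hf.nonneg j i) (mem_univ i)

theorem exists_isTransportPlan_diag_eq_min {X Y : Fin s → ℝ} (hX : ∀ i, 0 ≤ X i)
    (hY : ∀ i, 0 ≤ Y i) (hXY : ∑ i, X i = ∑ i, Y i) :
    ∃ f, IsTransportPlan X Y f ∧ ∀ i, f i i = min (X i) (Y i) := by
  set a : Fin s → ℝ := fun i => X i - min (X i) (Y i)
  set b : Fin s → ℝ := fun i => Y i - min (X i) (Y i)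
  set S := ∑ i, a i
  have ha : ∀ i, 0 ≤ a i := fun i => sub_nonneg.2 (min_le_left _ _)
  have hb : ∀ i, 0 ≤ b i := fun i => sub_nonneg.2 (min_le_right _ _)
  have hSb : ∑ i, b i = S := by simp only [a, b, S, sum_sub_distrib, hXY]
  have hab : ∀ i, a i * b i = 0 := fun i => by
    rcases min_cases (X i) (Y i) with ⟨h, _⟩ | ⟨h, _⟩ <;> simp [a, b, h]
  have mul_div_self_of_sum {c : Fin s → ℝ} (hc : ∀ i, 0 ≤ c i) (hcS : ∑ i, c i = S) (i) :
      c i * (S / S) = c i := by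
    rcases eq_or_ne S 0 with hS | hS
    · rw [← hcS, sum_eq_zero_iff_of_nonneg (fun j _ => hc j)] at hS
      simp [hS i (mem_univ i)]
    · rw [div_self hS, mul_one]
  refine ⟨fun i j => (if i = j then min (X i) (Y i) else 0) + a i * b j / S,
    ⟨fun i j => ?_, fun i => ?_, fun j => ?_⟩, fun i => by simp [hab]⟩
  · have := le_min (hX i) (hY i)
    have : 0 ≤ a i * b j / S := div_nonneg (mul_nonneg (ha i) (hb j)) (sum_nonneg fun k _ => ha k)
    split_ifs <;> linarith
  · rw [sum_add_distrib, sum_ite_eq, if_pos (mem_univ i), ← sum_div, ← mul_sum, hSb,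
      mul_div_assoc, mul_div_self_of_sum ha rfl]
    simp [a]
  · rw [sum_add_distrib, sum_ite_eq', if_pos (mem_univ j), ← sum_div, ← sum_mul,
      mul_div_right_comm, mul_comm, mul_div_self_of_sum hb hSb]
    simp [b]

noncomputable def starMetric (w : Fin s → ℝ) (i j : Fin s) : ℝ :=
  if i = j then 0 else (w i + w j) / 2

theorem transportCost_starMetric {w X Y : Fin s → ℝ} {f : Fin s → Fin s → ℝ}
    (hf : IsTransportPlan X Y f) :
    transportCost (starMetric w) f = (1 / 2) * ∑ i, w i * (X i + Y i - 2 * f i i) := by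
  have hterm (i j : Fin s) : starMetric w i j * f i j =
      w i * f i j / 2 + w j * f i j / 2 - if i = j then w i * f i i else 0 := by
    rcases eq_or_ne i j with rfl | h
    · simp only [starMetric, if_true]; ring
    · simp only [starMetric, h, if_false]; ring
  have hcol : ∑ i, ∑ j, w j * f i j = ∑ j, w j * Y j := by
    rw [sum_comm]; simp only [← mul_sum, hf.sum_col]
  have hdiag : ∑ i, ∑ j, (if i = j then w i * f i i else 0) = ∑ i, w i * f i i := by
    simp only [sum_ite_eq, mem_univ, if_true]
  simp only [transportCost, hterm, sum_sub_distrib, sum_add_distrib, ← sum_div, hf.sum_row, hcol,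
    hdiag, mul_sub, mul_add, mul_left_comm _ (2 : ℝ), ← mul_sum]
  ring

theorem sub_two_mul_min_eq_abs (x y : ℝ) : x + y - 2 * min x y = |x - y| := by
  rw [← max_sub_min_eq_abs', ← min_add_max x y]; ring

theorem EMD_starMetric {w X Y : Fin s → ℝ} (hw : ∀ i, 0 ≤ w i) (hX : ∀ i, 0 ≤ X i)
    (hY : ∀ i, 0 ≤ Y i) (hXY : ∑ i, X i = ∑ i, Y i) :
    EMD (starMetric w) X Y = (1 / 2) * ∑ i, w i * |X i - Y i| := by
  refine EMD_eq_of_forall_le_of_exists (fun f hf => ?_) ?_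
  · rw [transportCost_starMetric hf]
    gcongr with i
    · exact hw i
    rw [← sub_two_mul_min_eq_abs]
    linarith [hf.diag_le_min i]
  · obtain ⟨f, hf, hdiag⟩ := exists_isTransportPlan_diag_eq_min hX hY hXY
    refine ⟨f, hf, ?_⟩
    simp only [transportCost_starMetric hf, hdiag, sub_two_mul_min_eq_abs]

end TransportPlan

theorem d4_eq_starMetric : d4 = starMetric ![1, 1, 1, 0] := by
  ext i j; fin_cases i <;> fin_cases j <;> simp [d4, starMetric, Fin.ext_iff]

theorem abs_sub_eq_two_mul_ite_sub (x y : ℝ) :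
    |x - y| = 2 * (if y ≤ x then x - y else 0) - (x - y) := by
  split_ifs with h
  · rw [abs_of_nonneg (sub_nonneg.2 h)]; ring
  · rw [abs_of_neg (by linarith)]; ring

theorem EMD_d4 {A B : Fin 4 → ℝ} (hA : IsProbVec A) (hB : IsProbVec B) :
    EMD d4 A B = (1 / 2) * (|A 0 - B 0| + |A 1 - B 1| + |A 2 - B 2|) := by
  rw [d4_eq_starMetric, EMD_starMetric (by simp [Fin.forall_fin_succ]) hA.1 hB.1
    (hA.2.trans hB.2.symm), Fin.sum_univ_four]
  simp

theorem stmt1_general (A B : Fin 4 → ℝ) (hA : IsProbVec A) (hB : IsProbVec B) :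
    EMD d4 A B = (1/2) * (A 3 - B 3) +
      ∑ i ∈ ({0, 1, 2} : Finset (Fin 4)).filter (fun i => B i ≤ A i), (A i - B i) := by
  have hA1 := hA.2
  have hB1 := hB.2
  rw [Fin.sum_univ_four] at hA1 hB1
  rw [EMD_d4 hA hB, sum_filter, sum_insert (by decide), sum_insert (by decide), sum_singleton,
    abs_sub_eq_two_mul_ite_sub (A 0), abs_sub_eq_two_mul_ite_sub (A 1),
    abs_sub_eq_two_mul_ite_sub (A 2)]
  split_ifs <;> linarith

theorem stmt1 (A B : Fin 4 → ℝ) (hA : IsProbVec A) (hB : IsProbVec B)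
    (h3 : B 3 ≤ A 3) :
    EMD d4 A B = (1/2) * (A 3 - B 3) +
      ∑ i ∈ ({0, 1, 2} : Finset (Fin 4)).filter (fun i => B i ≤ A i), (A i - B i) :=
  stmt1_general A B hA hB
end

section
/- Let n ≥ 1 and let SA : Fin n → Fin n be an injective sensitive-attribute map on the rows Fin n, and let 1 ≤ k ≤ n. Then: (a) a nonempty set M ⊆ Fin n of rows satisfies EMD(P(M), P(Fin n)) ≤ 1 − k/n with respect to the equal-distance metric on Fin n if and only if |M| ≥ k; consequently (b) a partition of the rows Fin n is k-anonymous (every block has size at least k) if and only if every block B of the partition satisfies EMD(P(B), P(Fin n)) ≤ 1 − k/n. -/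
open Finset

def eqDist (s : ℕ) : Fin s → Fin s → ℝ := fun i j => if i = j then 0 else 1

/-- The SA distribution of a set `B` of rows, given a sensitive-attribute map `SA`. -/
noncomputable def SAdist {n s : ℕ} (SA : Fin n → Fin s) (B : Finset (Fin n)) :
    Fin s → ℝ :=
  fun i => ((B.filter (fun r => SA r = i)).card : ℝ) / B.card

/-- `P` is a partition of the rows `Fin n`: pairwise disjoint nonempty subsets
whose union is everything. -/
def IsRowPartition {n : ℕ} (P : Finset (Finset (Fin n))) : Prop :=
  (∀ B ∈ P, B.Nonempty) ∧
  (∀ B ∈ P, ∀ B' ∈ P, B ≠ B' → Disjoint B B') ∧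
  (∀ i : Fin n, ∃ B ∈ P, i ∈ B)

/-! With the equal-distance metric, moving mass costs 1 wherever it goes, so an optimal
plan keeps `min (X i) (Y i)` in place at every point and the EMD is the total variation
distance `∑ X - ∑ min (X i) (Y i)`. For an injective SA map, `P(M)` is uniform on the
`|M|` values taken on `M` and `P(Fin n)` is uniform on all `n` values, so the mass that
can stay put is `|M| / n` and `EMD(P(M), P(Fin n)) = 1 - |M| / n`. -/

section EMD

variable {s : ℕ} {d : Fin s → Fin s → ℝ} {X Y : Fin s → ℝ}

def IsCoupling (X Y : Fin s → ℝ) (f : Fin s → Fin s → ℝ) : Prop :=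
  (∀ i j, 0 ≤ f i j) ∧ (∀ i, ∑ j, f i j = X i) ∧ (∀ j, ∑ i, f i j = Y j)

lemma EMD_eq_of_isCoupling {f₀ : Fin s → Fin s → ℝ} (h₀ : IsCoupling X Y f₀)
    (hle : ∀ f, IsCoupling X Y f → ∑ i, ∑ j, d i j * f₀ i j ≤ ∑ i, ∑ j, d i j * f i j) :
    EMD d X Y = ∑ i, ∑ j, d i j * f₀ i j := by
  refine IsLeast.csInf_eq ⟨⟨f₀, h₀.1, h₀.2.1, h₀.2.2, rfl⟩, ?_⟩
  rintro _ ⟨f, hf₀, hrow, hcol, rfl⟩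
  exact hle f ⟨hf₀, hrow, hcol⟩

lemma sum_eqDist_mul (f : Fin s → Fin s → ℝ) :
    ∑ i, ∑ j, eqDist s i j * f i j = ∑ i, ∑ j, f i j - ∑ i, f i i := by
  rw [← Finset.sum_sub_distrib]
  refine Finset.sum_congr rfl fun i _ => ?_
  have : ∀ j, eqDist s i j * f i j = f i j - if i = j then f i j else 0 := fun j => by
    by_cases h : i = j <;> simp [eqDist, h]
  simp only [this, Finset.sum_sub_distrib, Finset.sum_ite_eq, Finset.mem_univ, if_true]

lemma IsCoupling.sum_sub_sum_min_le_cost {f : Fin s → Fin s → ℝ} (hf : IsCoupling X Y f) :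
    ∑ i, X i - ∑ i, min (X i) (Y i) ≤ ∑ i, ∑ j, eqDist s i j * f i j := by
  obtain ⟨hf₀, hrow, hcol⟩ := hf
  have hdiag : ∀ i, f i i ≤ min (X i) (Y i) := fun i =>
    le_min (hrow i ▸ Finset.single_le_sum (fun j _ => hf₀ i j) (Finset.mem_univ i))
      (hcol i ▸ Finset.single_le_sum (fun j _ => hf₀ j i) (Finset.mem_univ i))
  rw [sum_eqDist_mul, Finset.sum_congr rfl fun i _ => hrow i]
  linarith [Finset.sum_le_sum fun i (_ : i ∈ Finset.univ) => hdiag i]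

lemma mul_sum_div_sum_of_nonneg {a : Fin s → ℝ} (ha : ∀ j, 0 ≤ a j) (i : Fin s) :
    a i * (∑ j, a j) / ∑ j, a j = a i := by
  by_cases h : ∑ j, a j = 0
  · simp [(Finset.sum_eq_zero_iff_of_nonneg fun j _ => ha j).1 h i (Finset.mem_univ i)]
  · field_simp

/-- The excesses `X - min X Y` and `Y - min X Y` are spread proportionally over each other;
they have the same total because `∑ X = ∑ Y`, and disjoint supports. -/
lemma exists_isCoupling_cost_eq (hX : ∀ i, 0 ≤ X i) (hY : ∀ i, 0 ≤ Y i)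
    (hXY : ∑ i, X i = ∑ i, Y i) :
    ∃ f, IsCoupling X Y f ∧
      ∑ i, ∑ j, eqDist s i j * f i j = ∑ i, X i - ∑ i, min (X i) (Y i) := by
  set m : Fin s → ℝ := fun i => min (X i) (Y i)
  set a : Fin s → ℝ := fun i => X i - m i
  set b : Fin s → ℝ := fun i => Y i - m i
  have ha : ∀ i, 0 ≤ a i := fun i => sub_nonneg.2 (min_le_left _ _)
  have hb : ∀ i, 0 ≤ b i := fun i => sub_nonneg.2 (min_le_right _ _)
  have hab : ∑ i, b i = ∑ i, a i := by
    simp only [a, b, Finset.sum_sub_distrib, hXY]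
  have hdisj : ∀ i, a i * b i = 0 := fun i => by
    rcases le_total (X i) (Y i) with h | h <;> simp [a, b, m, h]
  let f : Fin s → Fin s → ℝ := fun i j =>
    (if i = j then m i else 0) + a i * b j / ∑ k, a k
  have hrow : ∀ i, ∑ j, f i j = X i := fun i => by
    simp only [f, Finset.sum_add_distrib, Finset.sum_ite_eq, Finset.mem_univ, if_true,
      ← Finset.sum_div, ← Finset.mul_sum, hab, mul_sum_div_sum_of_nonneg ha, m, a]
    ring
  have hcol : ∀ j, ∑ i, f i j = Y j := fun j => by
    simp only [f, Finset.sum_add_distrib, Finset.sum_ite_eq', Finset.mem_univ, if_true,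
      ← Finset.sum_div, ← Finset.sum_mul]
    rw [← hab, mul_comm, mul_sum_div_sum_of_nonneg hb]
    ring
  have hf₀ : ∀ i j, 0 ≤ f i j := fun i j =>
    add_nonneg (by split_ifs <;> simp [m, hX i, hY i])
      (div_nonneg (mul_nonneg (ha i) (hb j)) (Finset.sum_nonneg fun k _ => ha k))
  refine ⟨f, ⟨hf₀, hrow, hcol⟩, ?_⟩
  rw [sum_eqDist_mul, Finset.sum_congr rfl fun i _ => hrow i]
  simp [f, hdisj, m]

theorem EMD_eqDist (hX : ∀ i, 0 ≤ X i) (hY : ∀ i, 0 ≤ Y i) (hXY : ∑ i, X i = ∑ i, Y i) :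
    EMD (eqDist s) X Y = ∑ i, X i - ∑ i, min (X i) (Y i) := by
  obtain ⟨f, hf, hcost⟩ := exists_isCoupling_cost_eq hX hY hXY
  rw [EMD_eq_of_isCoupling hf fun g hg => hcost ▸ hg.sum_sub_sum_min_le_cost, hcost]

end EMD

section SAdist

variable {n s : ℕ} {SA : Fin n → Fin s} {B : Finset (Fin n)}

lemma SAdist_nonneg (SA : Fin n → Fin s) (B : Finset (Fin n)) (i : Fin s) :
    0 ≤ SAdist SA B i := by
  unfold SAdist
  positivity

lemma sum_SAdist (SA : Fin n → Fin s) (hB : B.Nonempty) : ∑ i, SAdist SA B i = 1 := by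
  simp only [SAdist, ← Finset.sum_div]
  rw [← Nat.cast_sum, ← Finset.card_eq_sum_card_fiberwise fun r _ => Finset.mem_univ (SA r)]
  exact div_self (Nat.cast_ne_zero.2 hB.card_pos.ne')

lemma SAdist_eq_zero_or_eq_inv_card (hSA : Function.Injective SA) (B : Finset (Fin n))
    (i : Fin s) : SAdist SA B i = 0 ∨ SAdist SA B i = (B.card : ℝ)⁻¹ := by
  have : (B.filter fun r => SA r = i).card ≤ 1 :=
    Finset.card_le_one.2 fun r hr r' hr' =>
      hSA ((Finset.mem_filter.1 hr).2.trans (Finset.mem_filter.1 hr').2.symm)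
  interval_cases h : (B.filter fun r => SA r = i).card <;> simp [SAdist, h]

lemma SAdist_univ_of_bijective (hSA : Function.Bijective SA) (i : Fin s) :
    SAdist SA Finset.univ i = (n : ℝ)⁻¹ := by
  have : (Finset.univ.filter fun r => SA r = i) = {(Equiv.ofBijective SA hSA).symm i} := by
    ext r
    simp [Equiv.eq_symm_apply]
  simp [SAdist, this]

theorem EMD_SAdist_univ (hSA : Function.Bijective SA) (hB : B.Nonempty) :
    EMD (eqDist s) (SAdist SA B) (SAdist SA Finset.univ) = 1 - (B.card : ℝ) / n := by
  have hB0 : (0 : ℝ) < B.card := Nat.cast_pos.2 hB.card_pos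
  have hBn : (B.card : ℝ) ≤ n := by
    exact_mod_cast (Finset.card_le_univ B).trans_eq (Fintype.card_fin n)
  have hmin : ∀ i,
      min (SAdist SA B i) (SAdist SA Finset.univ i) = SAdist SA B i * (B.card / n) := fun i => by
      rw [SAdist_univ_of_bijective hSA]
      rcases SAdist_eq_zero_or_eq_inv_card hSA.1 B i with h | h
      · simp [h, inv_nonneg]
      · rw [h, min_eq_right (inv_anti₀ hB0 hBn)]
        field_simp
  rw [EMD_eqDist (SAdist_nonneg SA B) (SAdist_nonneg SA _)
    ((sum_SAdist SA hB).trans (sum_SAdist SA (hB.mono (Finset.subset_univ B))).symm),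
    Finset.sum_congr rfl fun i _ => hmin i, ← Finset.sum_mul, sum_SAdist SA hB, one_mul]

end SAdist

theorem stmt3_general (n k : ℕ) (SA : Fin n → Fin n)
    (hSA : Function.Injective SA) :
    (∀ M : Finset (Fin n), M.Nonempty →
      (EMD (eqDist n) (SAdist SA M) (SAdist SA Finset.univ) ≤ 1 - (k : ℝ) / n ↔
        k ≤ M.card)) ∧
    (∀ P : Finset (Finset (Fin n)), IsRowPartition P →
      ((∀ B ∈ P, k ≤ B.card) ↔
        ∀ B ∈ P, EMD (eqDist n) (SAdist SA B) (SAdist SA Finset.univ) ≤ 1 - (k : ℝ) / n)) := by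
  have hSA' : Function.Bijective SA := Finite.injective_iff_bijective.1 hSA
  have part_a : ∀ M : Finset (Fin n), M.Nonempty →
      (EMD (eqDist n) (SAdist SA M) (SAdist SA Finset.univ) ≤ 1 - (k : ℝ) / n ↔
        k ≤ M.card) := fun M hM => by
    have hn : (0 : ℝ) < n := by
      exact_mod_cast hM.card_pos.trans_le ((Finset.card_le_univ M).trans_eq (Fintype.card_fin n))
    rw [EMD_SAdist_univ hSA' hM, sub_le_sub_iff_left, div_le_div_iff_of_pos_right hn,
      Nat.cast_le]
  exact ⟨part_a, fun P hP => forall₂_congr fun B hB => (part_a B (hP.1 B hB)).symm⟩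

theorem stmt3 (n k : ℕ) (hn : 1 ≤ n) (SA : Fin n → Fin n)
    (hSA : Function.Injective SA) (hk : 1 ≤ k) (hkn : k ≤ n) :
    (∀ M : Finset (Fin n), M.Nonempty →
      (EMD (eqDist n) (SAdist SA M) (SAdist SA Finset.univ) ≤ 1 - (k : ℝ) / n ↔
        k ≤ M.card)) ∧
    (∀ P : Finset (Finset (Fin n)), IsRowPartition P →
      ((∀ B ∈ P, k ≤ B.card) ↔
        ∀ B ∈ P, EMD (eqDist n) (SAdist SA B) (SAdist SA Finset.univ) ≤ 1 - (k : ℝ) / n)) :=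
  stmt3_general n k SA hSA
end

section
/- Let G be a simple graph on vertex set Fin n with n ≥ 2, and let T be its incidence table. Then for every set W ⊆ Fin n of rows with |W| ≥ 2, the suppression cost of W equals |W| · |{e ∈ E(G) : e has at least one endpoint in W}|. -/
/-! A column `e` of the incidence table is constant on `W` exactly when `e` misses `W`: off `e`
every entry is `0`, while a row `v ∈ W` on `e` carries the label `v + 1`, which differs both from
`0` and from the label of any other row of `W`. -/

open Finset

attribute [local instance] Classical.propDecidable

/-- The suppression cost of a set `B` of rows of table `T`: `|B|` times the number
of columns on which not all rows of `B` agree. -/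
noncomputable def suppCost {n : ℕ} {ι α : Type*} [Fintype ι]
    (T : Fin n → ι → α) (B : Finset (Fin n)) : ℕ :=
  B.card *
    (Finset.univ.filter (fun j : ι => ¬ ∀ i ∈ B, ∀ i' ∈ B, T i j = T i' j)).card

theorem ite_label_const_on_iff {α M : Type*} [Zero M] {ℓ : α → M}
    (hℓ : Function.Injective ℓ) (hℓ0 : ∀ a, ℓ a ≠ 0) {p : α → Prop} [DecidablePred p]
    {W : Finset α} (hW : W.Nontrivial) :
    (∀ i ∈ W, ∀ i' ∈ W, (if p i then ℓ i else 0) = (if p i' then ℓ i' else 0)) ↔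
      ∀ v ∈ W, ¬ p v := by
  refine ⟨fun hconst v hv hpv => ?_, fun hnone i hi i' hi' => by simp [hnone i hi, hnone i' hi']⟩
  obtain ⟨w, hw, hwv⟩ := hW.exists_ne v
  have hvw := hconst v hv w hw
  rw [if_pos hpv] at hvw
  split_ifs at hvw
  · exact hwv (hℓ hvw).symm
  · exact hℓ0 v hvw

theorem card_filter_univ_coe {α : Type*} (s : Finset α) (p : α → Prop) [DecidablePred p] :
    (univ.filter fun x : s => p x).card = (s.filter p).card := by
  rw [univ_eq_attach, filter_attach, card_map, card_attach]

theorem stmt4_general (n : ℕ) (G : SimpleGraph (Fin n)) [DecidableRel G.Adj]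
    (W : Finset (Fin n)) (hW : 2 ≤ W.card) :
    suppCost
        (fun (i : Fin n) (e : G.edgeFinset) =>
          if i ∈ (e : Sym2 (Fin n)) then (i : ℕ) + 1 else 0) W
      = W.card * (G.edgeFinset.filter (fun e => ∃ v ∈ W, v ∈ e)).card := by
  have hWnt : W.Nontrivial := one_lt_card_iff_nontrivial.mp hW
  have hlabel : Function.Injective fun i : Fin n => (i : ℕ) + 1 :=
    fun i j hij => Fin.ext (Nat.succ_injective hij)
  unfold suppCost
  rw [← card_filter_univ_coe G.edgeFinset]
  congr 2 with e
  simp only [mem_filter, mem_univ, true_and]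
  rw [ite_label_const_on_iff (p := (· ∈ (e : Sym2 (Fin n)))) hlabel
    (fun i => Nat.succ_ne_zero i) hWnt]
  simp only [not_forall, not_not, exists_prop]

theorem stmt4 (n : ℕ) (hn : 2 ≤ n) (G : SimpleGraph (Fin n)) [DecidableRel G.Adj]
    (W : Finset (Fin n)) (hW : 2 ≤ W.card) :
    suppCost
        (fun (i : Fin n) (e : G.edgeFinset) =>
          if i ∈ (e : Sym2 (Fin n)) then (i : ℕ) + 1 else 0) W
      = W.card * (G.edgeFinset.filter (fun e => ∃ v ∈ W, v ∈ e)).card :=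
  stmt4_general n G W hW
end

section
/- Let n ≥ 4 be even and let G be a simple graph on vertex set Fin n with edge set E(G); let T be its incidence table. Then the minimum, over all (n/2)-anonymous partitions P of the rows of T, of cost(P) equals (n/2)·(|E(G)| + b), where b is the minimum, over all partitions of Fin n into two sets V₁ and V₂ each of size n/2, of the number of edges of G having one endpoint in V₁ and the other in V₂. -/
/-!
For `k = n / 2`, a `k`-anonymous partition of the `2k` rows is either the trivial partition or a
bisection `{V, Vᶜ}`. In the incidence table the entries of row `i` are `0` or the label `i + 1`,
which differs from row to row, so on a block of at least two rows the column of an edge `e` is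
suppressed exactly when `e` meets the block. Since an edge meets both `V` and `Vᶜ` exactly when it
is cut, the bisection costs `k * (|E| + cut V)`, while the trivial partition costs
`n * |E| = k * (|E| + |E|)`, which is never smaller.
-/

open Finset

attribute [local instance] Classical.propDecidable

/-- The cost of a partition: the sum of the suppression costs of its blocks. -/
noncomputable def partCost {n : ℕ} {ι α : Type*} [Fintype ι]
    (T : Fin n → ι → α) (P : Finset (Finset (Fin n))) : ℕ :=
  ∑ B ∈ P, suppCost T B

open Function

section IndicatorColumns

variable {α ι β : Type*} [Zero β]

lemma not_forall_ite_eq_iff {f : α → β} (hf : Injective f) (hf0 : ∀ i, f i ≠ 0)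
    {B : Finset α} (hB : 1 < #B) (p : α → Prop) [DecidablePred p] :
    (¬ ∀ i ∈ B, ∀ i' ∈ B, (if p i then f i else 0) = (if p i' then f i' else 0)) ↔
      ∃ i ∈ B, p i := by
  constructor
  · contrapose!
    intro h i hi i' hi'
    rw [if_neg (h i hi), if_neg (h i' hi')]
  · rintro ⟨i, hi, hpi⟩ hconst
    obtain ⟨i', hi', hne⟩ := exists_mem_ne hB i
    have h := hconst i hi i' hi'
    rw [if_pos hpi] at h
    split_ifs at h
    · exact hne (hf h).symm
    · exact hf0 i h

lemma suppCost_ite {n : ℕ} [Fintype ι] {f : Fin n → β} (hf : Injective f) (hf0 : ∀ i, f i ≠ 0)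
    (p : Fin n → ι → Prop) [∀ i j, Decidable (p i j)] {B : Finset (Fin n)} (hB : 1 < #B) :
    suppCost (fun i j => if p i j then f i else 0) B = #B * #{j | ∃ i ∈ B, p i j} := by
  unfold suppCost
  congr 2
  ext j
  simp only [mem_filter, mem_univ, true_and]
  exact not_forall_ite_eq_iff hf hf0 hB (p · j)

end IndicatorColumns

lemma card_filter_exists_mem_add_card_filter_exists_mem_compl {α : Type*} [Fintype α]
    [DecidableEq α] (s : Finset (Sym2 α)) (B : Finset α) :
    #{e ∈ s | ∃ i ∈ B, i ∈ e} + #{e ∈ s | ∃ i ∈ Bᶜ, i ∈ e} =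
      #s + #{e ∈ s | ∃ u ∈ B, ∃ v ∈ Bᶜ, e = s(u, v)} := by
  rw [← card_union_add_card_inter, ← filter_or, ← filter_and]
  congr 2
  · refine filter_true_of_mem fun e _ => ?_
    induction e using Sym2.ind with
    | _ x y =>
      by_cases hx : x ∈ B
      exacts [.inl ⟨x, hx, Sym2.mem_mk_left x y⟩, .inr ⟨x, mem_compl.2 hx, Sym2.mem_mk_left x y⟩]
  · ext e
    simp only [mem_filter]
    induction e using Sym2.ind with
    | _ x y =>
      simp only [Sym2.mem_iff, mem_compl, Sym2.eq_iff]
      grind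

namespace IsRowPartition

variable {n : ℕ} {P : Finset (Finset (Fin n))}

lemma sum_card (hP : IsRowPartition P) : ∑ B ∈ P, #B = n := by
  have hunion : P.biUnion id = univ := eq_univ_of_forall fun i => mem_biUnion.2 (hP.2.2 i)
  calc ∑ B ∈ P, #B = #(P.biUnion id) := (card_biUnion hP.2.1).symm
    _ = n := by rw [hunion, card_univ, Fintype.card_fin]

lemma eq_univ_or_eq_pair (hP : IsRowPartition P) {k : ℕ} (hk : 0 < k) (hn : n = 2 * k)
    (hsize : ∀ B ∈ P, k ≤ #B) :
    P = {univ} ∨ ∃ B : Finset (Fin n), #B = k ∧ P = {B, Bᶜ} := by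
  have hcard : #P * k ≤ 2 * k := by
    simpa [hP.sum_card, hn] using card_nsmul_le_sum P card k hsize
  have hcover : ∀ i, ∃ B ∈ P, i ∈ B := hP.2.2
  obtain ⟨B₀, hB₀, -⟩ := hcover ⟨0, by omega⟩
  have hP2 : #P ≤ 2 := Nat.le_of_mul_le_mul_right hcard hk
  rcases (show #P = 1 ∨ #P = 2 by have := card_pos.2 ⟨B₀, hB₀⟩; omega) with h | h
  · obtain ⟨B, rfl⟩ := card_eq_one.1 h
    left
    simpa [eq_univ_iff_forall] using hcover
  · obtain ⟨B, C, hBC, rfl⟩ := card_eq_two.1 h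
    have hsum : #B + #C = n := by rw [← sum_pair hBC]; exact hP.sum_card
    have hdisj : Disjoint B C := hP.2.1 B (by simp) C (by simp) hBC
    have hB : #B = k := by
      have := hsize B (by simp); have := hsize C (by simp); omega
    refine .inr ⟨B, hB, ?_⟩
    rw [eq_of_subset_of_card_le (subset_compl_iff_disjoint_left.2 hdisj) ?_]
    rw [card_compl, Fintype.card_fin]
    omega

end IsRowPartition

lemma isRowPartition_pair {n : ℕ} {B : Finset (Fin n)} (hB : B.Nonempty) (hBc : Bᶜ.Nonempty) :
    IsRowPartition {B, Bᶜ} := by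
  refine ⟨?_, ?_, fun i => ?_⟩
  · simp [hB, hBc]
  · simp only [mem_insert, mem_singleton]
    rintro _ (rfl | rfl) _ (rfl | rfl) hne
    exacts [absurd rfl hne, disjoint_compl_right, disjoint_compl_left, absurd rfl hne]
  · by_cases hi : i ∈ B
    exacts [⟨B, by simp, hi⟩, ⟨Bᶜ, by simp, mem_compl.2 hi⟩]

section IncidenceTable

variable {n : ℕ} (G : SimpleGraph (Fin n)) [DecidableRel G.Adj]

def incidenceTable : Fin n → G.edgeFinset → ℕ := fun i e =>
  if i ∈ (e : Sym2 (Fin n)) then (i : ℕ) + 1 else 0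

lemma suppCost_incidenceTable {B : Finset (Fin n)} (hB : 1 < #B) :
    suppCost (incidenceTable G) B = #B * #{e ∈ G.edgeFinset | ∃ i ∈ B, i ∈ e} := by
  unfold incidenceTable
  rw [suppCost_ite (f := fun i : Fin n => (i : ℕ) + 1)
    (fun i j h => Fin.ext (by simpa using h)) (fun i => by omega) _ hB, univ_eq_attach,
    filter_attach (fun e : Sym2 (Fin n) => ∃ i ∈ B, i ∈ e), card_map, card_attach]

lemma partCost_incidenceTable_univ (hn : 1 < n) :
    partCost (incidenceTable G) {univ} = n * #G.edgeFinset := by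
  rw [partCost, sum_singleton, suppCost_incidenceTable G (by simpa using hn), card_univ,
    Fintype.card_fin, filter_true_of_mem fun e _ => ?_]
  induction e using Sym2.ind with
  | _ x y => exact ⟨x, mem_univ x, Sym2.mem_mk_left x y⟩

lemma partCost_incidenceTable_pair {k : ℕ} (hk : 1 < k) (hn : n = 2 * k) {B : Finset (Fin n)}
    (hB : #B = k) :
    partCost (incidenceTable G) {B, Bᶜ} =
      k * (#G.edgeFinset + #{e ∈ G.edgeFinset | ∃ u ∈ B, ∃ v ∈ Bᶜ, e = s(u, v)}) := by
  have hBc : #Bᶜ = k := by rw [card_compl, Fintype.card_fin]; omega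
  have hne : B ≠ Bᶜ := by
    obtain ⟨i, hi⟩ := card_pos.1 (show 0 < #B by omega)
    exact fun h => mem_compl.1 (h ▸ hi) hi
  rw [partCost, sum_pair hne, suppCost_incidenceTable G (by omega),
    suppCost_incidenceTable G (by omega), hB, hBc, ← mul_add]
  convert congrArg (k * ·) (card_filter_exists_mem_add_card_filter_exists_mem_compl G.edgeFinset B)

end IncidenceTable

theorem stmt5 (n : ℕ) (hn : 4 ≤ n) (hev : Even n)
    (G : SimpleGraph (Fin n)) [DecidableRel G.Adj] :
    sInf {c : ℕ | ∃ P : Finset (Finset (Fin n)), IsRowPartition P ∧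
        (∀ B ∈ P, n / 2 ≤ B.card) ∧
        partCost
          (fun (i : Fin n) (e : G.edgeFinset) =>
            if i ∈ (e : Sym2 (Fin n)) then (i : ℕ) + 1 else 0) P = c}
      = (n / 2) *
        (G.edgeFinset.card +
          sInf {b : ℕ | ∃ V₁ : Finset (Fin n), V₁.card = n / 2 ∧
            b = (G.edgeFinset.filter
                  (fun e => ∃ u ∈ V₁, ∃ v ∈ V₁ᶜ, e = s(u, v))).card}) := by
  change sInf {c | ∃ P, IsRowPartition P ∧ _ ∧ partCost (incidenceTable G) P = c} = _
  set k := n / 2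
  have hnk : n = 2 * k := by obtain ⟨m, rfl⟩ := hev; omega
  set bisectionCuts := {b : ℕ | ∃ V₁ : Finset (Fin n), #V₁ = k ∧
    b = #{e ∈ G.edgeFinset | ∃ u ∈ V₁, ∃ v ∈ V₁ᶜ, e = s(u, v)}}
  obtain ⟨V₀, -, hV₀⟩ := exists_subset_card_eq (s := (univ : Finset (Fin n))) (n := k)
    (by rw [card_univ, Fintype.card_fin]; omega)
  obtain ⟨V, hV, hbV⟩ := Nat.sInf_mem (s := bisectionCuts) ⟨_, V₀, hV₀, rfl⟩
  have hVc : #Vᶜ = k := by rw [card_compl, Fintype.card_fin]; omega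
  have hpair : ∃ P, IsRowPartition P ∧ (∀ B ∈ P, k ≤ #B) ∧
      partCost (incidenceTable G) P = k * (#G.edgeFinset + sInf bisectionCuts) := by
    refine ⟨{V, Vᶜ}, isRowPartition_pair (card_pos.1 (by omega)) (card_pos.1 (by omega)), ?_, ?_⟩
    · simp only [mem_insert, mem_singleton]
      rintro _ (rfl | rfl) <;> omega
    · rw [partCost_incidenceTable_pair G (by omega) hnk hV, hbV]
  refine le_antisymm (Nat.sInf_le hpair) (le_csInf ⟨_, hpair⟩ ?_)
  rintro c ⟨P, hP, hsize, rfl⟩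
  rcases hP.eq_univ_or_eq_pair (by omega) hnk hsize with rfl | ⟨B, hB, rfl⟩
  · have hb : sInf bisectionCuts ≤ #G.edgeFinset := hbV ▸ card_filter_le _ _
    calc k * (#G.edgeFinset + sInf bisectionCuts) ≤ k * (#G.edgeFinset + #G.edgeFinset) := by
          gcongr
      _ = partCost (incidenceTable G) {univ} := by
          rw [partCost_incidenceTable_univ G (by omega), ← two_mul, ← mul_assoc, mul_comm k, ← hnk]
  · rw [partCost_incidenceTable_pair G (by omega) hnk hB]
    gcongr
    exact Nat.sInf_le ⟨B, hB, rfl⟩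
end

section
/- Let T : Fin n → Fin m → Σ be a table with n ≥ 4 even and m ≥ 1, let c be a rational number with 0 < c ≤ 1/3 such that n' := n/(2c) is an integer, and let λ₁, λ₂ be two symbols not in Σ. Define the table T' : Fin n' → Fin (m + n·m) → (Σ ∪ {λ₁, λ₂}) by: for rows i < n, T'(i)(j) = T(i)(j) for columns j < m and T'(i)(j) = λ₁ for columns j ≥ m; for rows n ≤ i < n', T'(i)(j) = λ₂ for all columns j. Then the minimum cost of an (n/2)-anonymous partition of T' (note that c·n' = n/2) equals the minimum cost of an (n/2)-anonymous partition of T. -/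
open Finset

attribute [local instance] Classical.propDecidable

/-- The extended table `T'` of the reduction: rows `i < n` keep `T` on the first `m`
columns and carry the fresh symbol `λ₁ = Sum.inr 0` on the remaining `n·m` columns;
rows `n ≤ i < n'` are constantly the fresh symbol `λ₂ = Sum.inr 1`. -/
def extTable {σ : Type*} {n m : ℕ} (T : Fin n → Fin m → σ) (n' : ℕ) :
    Fin n' → Fin (m + n * m) → σ ⊕ Fin 2 :=
  fun i j =>
    if h : (i : ℕ) < n then
      if h' : (j : ℕ) < m then Sum.inl (T ⟨i, h⟩ ⟨j, h'⟩) else Sum.inr 0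
    else Sum.inr 1

/-!
The padding rows of `T'` are constant, so they form one block of size `n' - n ≥ n / 2` and
cost `0`; adding it to a `k`-anonymous partition of `T` gives one of `T'` of the same cost.
Conversely, a block mixing original and padding rows disagrees in all `m + n * m` columns, so it
alone costs at least `(n / 2) * (m + n * m) ≥ n * m`, more than suppressing all of `T`.
A partition of `T'` without such blocks restricts, on its blocks of original rows, to a
partition of `T` of no larger cost.
-/

section SuppCost

variable {n : ℕ} {ι α : Type*} [Fintype ι]

lemma suppCost_le_card_mul (T : Fin n → ι → α) (B : Finset (Fin n)) :
    suppCost T B ≤ B.card * Fintype.card ι :=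
  Nat.mul_le_mul_left _ (card_filter_le _ _)

lemma suppCost_eq_zero_of_forall_eq {T : Fin n → ι → α} {B : Finset (Fin n)}
    (h : ∀ i ∈ B, ∀ i' ∈ B, T i = T i') : suppCost T B = 0 := by
  rw [suppCost, filter_false_of_mem fun j _ hne =>
    hne fun i hi i' hi' => congrFun (h i hi i' hi') j, card_empty, mul_zero]

lemma suppCost_eq_of_forall_ne {T : Fin n → ι → α} {B : Finset (Fin n)} {i i' : Fin n}
    (hi : i ∈ B) (hi' : i' ∈ B) (h : ∀ j, T i j ≠ T i' j) :
    suppCost T B = B.card * Fintype.card ι := by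
  rw [suppCost, filter_true_of_mem fun j _ => by exact fun hall => h j (hall i hi i' hi'),
    card_univ]

lemma suppCost_map {n' : ℕ} (T : Fin n' → ι → α) (e : Fin n ↪ Fin n')
    (B : Finset (Fin n)) :
    suppCost T (B.map e) = suppCost (fun i => T (e i)) B := by
  simp [suppCost]

lemma suppCost_comp_left {β : Type*} {f : α → β} (hf : Function.Injective f)
    (T : Fin n → ι → α) (B : Finset (Fin n)) :
    suppCost (fun i j => f (T i j)) B = suppCost T B := by
  simp [suppCost, hf.eq_iff]

lemma suppCost_comp_right {κ : Type*} [Fintype κ] (T : Fin n → κ → α) (g : ι ↪ κ)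
    {B : Finset (Fin n)}
    (hconst : ∀ j ∉ Set.range g, ∀ i ∈ B, ∀ i' ∈ B, T i j = T i' j) :
    suppCost (fun i j => T i (g j)) B = suppCost T B := by
  rw [suppCost, suppCost, ← card_map g]
  congr 2
  ext k
  simp only [mem_map, mem_filter, mem_univ, true_and]
  constructor
  · rintro ⟨j, hj, rfl⟩
    exact hj
  · intro hk
    by_cases hk_range : k ∈ Set.range g
    · obtain ⟨j, rfl⟩ := hk_range
      exact ⟨j, hk, rfl⟩
    · exact absurd (hconst k hk_range) hk

end SuppCost

section RowPartition

variable {n n' : ℕ}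

lemma IsRowPartition.insert_compl_image_map {P : Finset (Finset (Fin n))}
    (hP : IsRowPartition P) (e : Fin n ↪ Fin n') (hne : (univ.map e)ᶜ.Nonempty) :
    IsRowPartition (insert (univ.map e)ᶜ (P.image (map e))) := by
  obtain ⟨hP_ne, hP_disj, hP_cover⟩ := hP
  have disj_compl : ∀ C : Finset (Fin n), Disjoint (univ.map e)ᶜ (C.map e) := fun C =>
    disjoint_left.mpr fun i hi hiC => by
      obtain ⟨a, -, rfl⟩ := mem_map.mp hiC
      simp at hi
  refine ⟨?_, ?_, fun i => ?_⟩
  · simp only [mem_insert, mem_image]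
    rintro B (rfl | ⟨C, hC, rfl⟩)
    exacts [hne, (hP_ne C hC).map]
  · simp only [mem_insert, mem_image]
    rintro B (rfl | ⟨C, hC, rfl⟩) B' (rfl | ⟨C', hC', rfl⟩) hBB'
    · exact absurd rfl hBB'
    · exact disj_compl C'
    · exact (disj_compl C).symm
    · exact (disjoint_map e).mpr (hP_disj C hC C' hC' fun h => hBB' (h ▸ rfl))
  · by_cases hi : i ∈ (univ.map e)ᶜ
    · exact ⟨_, mem_insert_self _ _, hi⟩
    · obtain ⟨a, -, rfl⟩ := mem_map.mp (notMem_compl.mp hi)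
      obtain ⟨C, hC, haC⟩ := hP_cover a
      exact ⟨C.map e, mem_insert_of_mem (mem_image_of_mem _ hC), mem_map_of_mem e haC⟩

lemma IsRowPartition.preimage_map {P : Finset (Finset (Fin n'))} (hP : IsRowPartition P)
    (e : Fin n ↪ Fin n') (hclosed : ∀ B ∈ P, ∀ a, e a ∈ B → B ⊆ univ.map e) :
    IsRowPartition (P.preimage (map e) (map_injective e).injOn) := by
  obtain ⟨hP_ne, hP_disj, hP_cover⟩ := hP
  refine ⟨fun C hC => ?_, fun C hC C' hC' hCC' => ?_, fun a => ?_⟩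
  · exact map_nonempty.mp (hP_ne _ (mem_preimage.mp hC))
  · exact (disjoint_map e).mp
      (hP_disj _ (mem_preimage.mp hC) _ (mem_preimage.mp hC') (map_injective e |>.ne hCC'))
  · obtain ⟨B, hB, haB⟩ := hP_cover (e a)
    obtain ⟨C, -, rfl⟩ := subset_map_iff.mp (hclosed B hB a haB)
    exact ⟨C, mem_preimage.mpr hB, (mem_map' e).mp haB⟩

end RowPartition

section ExtTable

variable {σ : Type*} {n m n' : ℕ} (T : Fin n → Fin m → σ)

lemma le_of_notMem_map_castLEEmb {h : n ≤ n'} {i : Fin n'}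
    (hi : i ∉ univ.map (Fin.castLEEmb h)) : n ≤ i := by
  by_contra hlt
  exact hi (mem_map.mpr ⟨⟨i, by omega⟩, mem_univ _, rfl⟩)

lemma extTable_castLE_castAdd (h : n ≤ n') (a : Fin n) (j : Fin m) :
    extTable T n' (Fin.castLE h a) (Fin.castAdd (n * m) j) = Sum.inl (T a j) := by
  simp [extTable]

lemma extTable_castLE_of_le (h : n ≤ n') (a : Fin n) {j : Fin (m + n * m)} (hj : m ≤ j) :
    extTable T n' (Fin.castLE h a) j = Sum.inr 0 := by
  simp [extTable, hj]

lemma extTable_of_le {i : Fin n'} (hi : n ≤ i) (j : Fin (m + n * m)) :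
    extTable T n' i j = Sum.inr 1 := by
  simp [extTable, hi]

lemma suppCost_extTable_map (h : n ≤ n') (C : Finset (Fin n)) :
    suppCost (extTable T n') (C.map (Fin.castLEEmb h)) = suppCost T C := by
  have hconst : ∀ j ∉ Set.range (Fin.castAddEmb (n * m)), ∀ a ∈ C, ∀ a' ∈ C,
      extTable T n' (Fin.castLEEmb h a) j = extTable T n' (Fin.castLEEmb h a') j := by
    intro j hj a _ a' _
    have hmj : m ≤ j := by simpa [Fin.castAddEmb, Fin.range_castLE] using hj
    exact (extTable_castLE_of_le T h a hmj).trans (extTable_castLE_of_le T h a' hmj).symm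
  rw [suppCost_map, ← suppCost_comp_right _ _ hconst]
  convert suppCost_comp_left (Sum.inl_injective (β := Fin 2)) T C using 2
  funext a j
  exact extTable_castLE_castAdd T h a j

lemma suppCost_extTable_compl (h : n ≤ n') :
    suppCost (extTable T n') (univ.map (Fin.castLEEmb h))ᶜ = 0 :=
  suppCost_eq_zero_of_forall_eq fun i hi i' hi' => funext fun j => by
    rw [extTable_of_le T (le_of_notMem_map_castLEEmb (mem_compl.mp hi)),
      extTable_of_le T (le_of_notMem_map_castLEEmb (mem_compl.mp hi'))]

lemma suppCost_extTable_of_mixed (h : n ≤ n') {B : Finset (Fin n')} {a : Fin n} {i : Fin n'}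
    (ha : Fin.castLE h a ∈ B) (hi : i ∈ B) (hi_pad : i ∉ univ.map (Fin.castLEEmb h)) :
    suppCost (extTable T n') B = B.card * (m + n * m) := by
  rw [suppCost_eq_of_forall_ne ha hi, Fintype.card_fin]
  intro j
  rw [extTable_of_le T (le_of_notMem_map_castLEEmb hi_pad)]
  by_cases hj : (j : ℕ) < m
  · simp [extTable, hj]
  · rw [extTable_castLE_of_le T h a (not_lt.mp hj)]
    simp

end ExtTable

lemma Nat.sInf_le_sInf_of_forall_exists_le {s t : Set ℕ} (hs : ∀ x ∈ s, ∃ y ∈ t, y ≤ x)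
    (ht : ∀ y ∈ t, ∃ x ∈ s, x ≤ y) : sInf s ≤ sInf t := by
  rcases t.eq_empty_or_nonempty with rfl | ht_ne
  · have : s = ∅ := Set.eq_empty_of_forall_notMem fun x hx => by simpa using hs x hx
    simp [this]
  · obtain ⟨x, hx, hle⟩ := ht _ (Nat.sInf_mem ht_ne)
    exact (Nat.sInf_le hx).trans hle

lemma Nat.sInf_eq_sInf_of_forall_exists_le {s t : Set ℕ} (hs : ∀ x ∈ s, ∃ y ∈ t, y ≤ x)
    (ht : ∀ y ∈ t, ∃ x ∈ s, x ≤ y) : sInf s = sInf t :=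
  le_antisymm (Nat.sInf_le_sInf_of_forall_exists_le hs ht)
    (Nat.sInf_le_sInf_of_forall_exists_le ht hs)

def anonymizationCosts {n : ℕ} {ι α : Type*} [Fintype ι] (T : Fin n → ι → α) (k : ℕ) :
    Set ℕ :=
  {c | ∃ P : Finset (Finset (Fin n)), IsRowPartition P ∧ (∀ B ∈ P, k ≤ B.card) ∧
    partCost T P = c}

section AnonymizationCosts

variable {σ : Type*} {n m n' k : ℕ} (T : Fin n → Fin m → σ)

lemma partCost_singleton_univ_mem_anonymizationCosts (hn : 0 < n) (hk : k ≤ n) :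
    partCost T {univ} ∈ anonymizationCosts T k := by
  refine ⟨{univ}, ⟨?_, ?_, fun i => ⟨univ, mem_singleton_self _, mem_univ i⟩⟩, ?_, rfl⟩
  · intro B hB
    rw [mem_singleton.mp hB]
    exact ⟨⟨0, hn⟩, mem_univ _⟩
  · simp
  · simpa using hk

lemma anonymizationCosts_subset_extTable (hn : n < n') (hk : k ≤ n' - n) :
    anonymizationCosts T k ⊆ anonymizationCosts (extTable T n') k := by
  rintro c ⟨P, hP, hsize, rfl⟩
  set e := Fin.castLEEmb hn.le
  have hcard : (univ.map e)ᶜ.card = n' - n := by simp [card_compl]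
  have hne : (univ.map e)ᶜ.Nonempty := card_pos.mp (by omega)
  have hnotMem : (univ.map e)ᶜ ∉ P.image (map e) := by
    intro hmem
    obtain ⟨C, -, hC⟩ := mem_image.mp hmem
    obtain ⟨i, hi⟩ := hne
    obtain ⟨a, -, rfl⟩ := mem_map.mp (hC ▸ hi)
    simp at hi
  refine ⟨_, hP.insert_compl_image_map e hne, ?_, ?_⟩
  · simp only [mem_insert, mem_image]
    rintro B (rfl | ⟨C, hC, rfl⟩)
    · rwa [hcard]
    · simpa using hsize C hC
  · rw [partCost, sum_insert hnotMem, suppCost_extTable_compl, zero_add,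
      sum_image fun _ _ _ _ => map_injective e |>.eq_iff.mp]
    exact sum_congr rfl fun C _ => suppCost_extTable_map T hn.le C

lemma exists_le_of_mem_anonymizationCosts_extTable (hk : 0 < k) (hkn : k ≤ n) (h : n ≤ n')
    {c : ℕ} (hc : c ∈ anonymizationCosts (extTable T n') k) :
    ∃ c₀ ∈ anonymizationCosts T k, c₀ ≤ c := by
  obtain ⟨P, hP, hsize, rfl⟩ := hc
  set e := Fin.castLEEmb h
  by_cases hclosed : ∀ B ∈ P, ∀ a, e a ∈ B → B ⊆ univ.map e
  · refine ⟨_, ⟨_, hP.preimage_map e hclosed, fun C hC => ?_, rfl⟩, ?_⟩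
    · simpa using hsize _ (mem_preimage.mp hC)
    · calc partCost T (P.preimage (map e) (map_injective e).injOn)
          = ∑ B ∈ P with B ∈ Set.range (map e), suppCost (extTable T n') B := by
            rw [partCost, ← sum_preimage' _ _ (map_injective e).injOn]
            exact sum_congr rfl fun C _ => (suppCost_extTable_map T h C).symm
        _ ≤ partCost (extTable T n') P := sum_le_sum_of_subset (filter_subset _ _)
  · push Not at hclosed
    obtain ⟨B, hB, a, ha, hB_sub⟩ := hclosed
    obtain ⟨i, hi, hi_pad⟩ := not_subset.mp hB_sub
    refine ⟨_, partCost_singleton_univ_mem_anonymizationCosts T (by omega) hkn, ?_⟩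
    calc partCost T {univ} ≤ n * m := by
          simpa [partCost] using suppCost_le_card_mul T univ
      _ ≤ k * (m + n * m) := (Nat.le_add_left _ _).trans (Nat.le_mul_of_pos_left _ hk)
      _ ≤ B.card * (m + n * m) := Nat.mul_le_mul_right _ (hsize B hB)
      _ = suppCost (extTable T n') B := (suppCost_extTable_of_mixed T h ha hi hi_pad).symm
      _ ≤ partCost (extTable T n') P := single_le_sum (fun _ _ => Nat.zero_le _) hB

end AnonymizationCosts

lemma three_mul_le_two_mul_of_cast_eq_div {n n' : ℕ} {c : ℚ} (hc0 : 0 < c) (hc1 : c ≤ 1 / 3)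
    (hn' : (n' : ℚ) = n / (2 * c)) : 3 * n ≤ 2 * n' := by
  have hn : (n : ℚ) = n' * (2 * c) := by
    rw [hn']
    field_simp
  exact_mod_cast (by nlinarith : (3 * n : ℚ) ≤ 2 * n')

theorem stmt6_general {σ : Type*} (n m : ℕ) (hn : 4 ≤ n)
    (T : Fin n → Fin m → σ) (c : ℚ) (hc0 : 0 < c) (hc1 : c ≤ 1 / 3)
    (n' : ℕ) (hn' : (n' : ℚ) = (n : ℚ) / (2 * c)) :
    sInf {k : ℕ | ∃ P : Finset (Finset (Fin n')), IsRowPartition P ∧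
        (∀ B ∈ P, n / 2 ≤ B.card) ∧ partCost (extTable T n') P = k}
      = sInf {k : ℕ | ∃ P : Finset (Finset (Fin n)), IsRowPartition P ∧
          (∀ B ∈ P, n / 2 ≤ B.card) ∧ partCost T P = k} := by
  have hpad : 3 * n ≤ 2 * n' := three_mul_le_two_mul_of_cast_eq_div hc0 hc1 hn'
  change sInf (anonymizationCosts (extTable T n') (n / 2)) = sInf (anonymizationCosts T (n / 2))
  refine Nat.sInf_eq_sInf_of_forall_exists_le (fun x hx => ?_) (fun x hx => ?_)
  · exact exists_le_of_mem_anonymizationCosts_extTable T (by omega) (by omega) (by omega) hx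
  · exact ⟨x, anonymizationCosts_subset_extTable T (by omega) (by omega) hx, le_rfl⟩

theorem stmt6 {σ : Type*} (n m : ℕ) (hn : 4 ≤ n) (hev : Even n) (hm : 1 ≤ m)
    (T : Fin n → Fin m → σ) (c : ℚ) (hc0 : 0 < c) (hc1 : c ≤ 1 / 3)
    (n' : ℕ) (hn' : (n' : ℚ) = (n : ℚ) / (2 * c)) :
    sInf {k : ℕ | ∃ P : Finset (Finset (Fin n')), IsRowPartition P ∧
        (∀ B ∈ P, n / 2 ≤ B.card) ∧ partCost (extTable T n') P = k}
      = sInf {k : ℕ | ∃ P : Finset (Finset (Fin n)), IsRowPartition P ∧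
          (∀ B ∈ P, n / 2 ≤ B.card) ∧ partCost T P = k} :=
  stmt6_general n m hn T c hc0 hc1 n' hn'
end

section
/- Let G be a simple graph on n vertices and let k ≥ 1 with 2k < n. Let G' be obtained from G by adding n − 2k new vertices, each adjacent to every other vertex of G' (both old and new), so that G' has exactly 2(n − k) vertices. Then G contains a clique with exactly k vertices if and only if G' contains a clique with exactly n − k vertices (i.e., half the vertices of G'). -/
/-- The graph obtained from `G` by adding a set `β` of new universal vertices:
each new vertex is adjacent to every other vertex (old or new). -/
def addUniversal {α β : Type*} (G : SimpleGraph α) : SimpleGraph (α ⊕ β) where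
  Adj a b := a ≠ b ∧ ∀ u v, a = Sum.inl u → b = Sum.inl v → G.Adj u v
  symm := by
    constructor
    rintro a b ⟨hab, h⟩
    refine ⟨hab.symm, ?_⟩
    rintro u v rfl rfl
    exact (h v u rfl rfl).symm
  loopless := by
    constructor
    rintro a ⟨h, -⟩
    exact h rfl

/-! The cliques of `addUniversal G` are exactly the cliques of `G` enlarged by any set of new
vertices, and a clique contains cliques of every smaller size. So `addUniversal G` has a clique of size
`k + |β|` iff `G` has one of size `k`, and `n - k = k + (n - 2k)` once `2k ≤ n`. -/

open Finset SimpleGraph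

section

variable {α β : Type*} {G : SimpleGraph α}

@[simp]
lemma addUniversal_adj_inl_inl {u v : α} :
    (addUniversal (β := β) G).Adj (.inl u) (.inl v) ↔ G.Adj u v :=
  ⟨fun h => h.2 u v rfl rfl,
    fun h => ⟨fun huv => h.ne (Sum.inl_injective huv), by rintro _ _ ⟨⟩ ⟨⟩; exact h⟩⟩

lemma isClique_addUniversal_iff {s : Set (α ⊕ β)} :
    (addUniversal G).IsClique s ↔ G.IsClique (Sum.inl ⁻¹' s) := by
  constructor
  · intro h u hu v hv huv
    exact addUniversal_adj_inl_inl.1 (h hu hv (Sum.inl_injective.ne huv))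
  · intro h a ha b hb hab
    refine ⟨hab, ?_⟩
    rintro u v rfl rfl
    exact h ha hb (ne_of_apply_ne Sum.inl hab)

lemma SimpleGraph.IsNClique.disjSum_univ_addUniversal [Fintype β] {k : ℕ} {s : Finset α}
    (hs : G.IsNClique k s) :
    (addUniversal (β := β) G).IsNClique (k + Fintype.card β) (s.disjSum univ) := by
  refine ⟨isClique_addUniversal_iff.2 ?_, by rw [card_disjSum, hs.card_eq, card_univ]⟩
  convert hs.isClique
  ext
  simp

lemma exists_isNClique_of_isNClique_addUniversal [Fintype β] {k m : ℕ} {s : Finset (α ⊕ β)}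
    (hs : (addUniversal (β := β) G).IsNClique m s) (hkm : k + Fintype.card β ≤ m) :
    ∃ t : Finset α, G.IsNClique k t := by
  have hleft : G.IsClique (s.toLeft : Set α) := by
    convert isClique_addUniversal_iff.1 hs.isClique
    ext
    simp
  have hk : k ≤ #s.toLeft := by
    have := card_le_univ s.toRight
    have := card_toLeft_add_card_toRight (u := s)
    rw [hs.card_eq] at this
    omega
  obtain ⟨t, hts, rfl⟩ := exists_subset_card_eq hk
  exact ⟨t, hleft.subset (by exact_mod_cast hts), rfl⟩

theorem exists_isNClique_addUniversal_iff [Fintype β] {k : ℕ} :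
    (∃ s, (addUniversal (β := β) G).IsNClique (k + Fintype.card β) s) ↔
      ∃ t : Finset α, G.IsNClique k t :=
  ⟨fun ⟨_, hs⟩ => exists_isNClique_of_isNClique_addUniversal hs le_rfl,
    fun ⟨_, ht⟩ => ⟨_, ht.disjSum_univ_addUniversal⟩⟩

end

theorem stmt8_general (n k : ℕ) (h2k : 2 * k < n) (G : SimpleGraph (Fin n)) :
    (∃ s : Finset (Fin n), G.IsNClique k s) ↔
    (∃ s : Finset (Fin n ⊕ Fin (n - 2 * k)),
      (addUniversal (β := Fin (n - 2 * k)) G).IsNClique (n - k) s) := by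
  have hsize : n - k = k + Fintype.card (Fin (n - 2 * k)) := by
    rw [Fintype.card_fin]
    omega
  rw [hsize, exists_isNClique_addUniversal_iff]

theorem stmt8 (n k : ℕ) (hk : 1 ≤ k) (h2k : 2 * k < n) (G : SimpleGraph (Fin n)) :
    (∃ s : Finset (Fin n), G.IsNClique k s) ↔
    (∃ s : Finset (Fin n ⊕ Fin (n - 2 * k)),
      (addUniversal (β := Fin (n - 2 * k)) G).IsNClique (n - k) s) :=
  stmt8_general n k h2k G
end

section
/- Let n ≥ 4 be even, let c be a rational number with 1/3 < c < 1/2 such that n' := n/(2c) is an integer with n' ≥ n + 2, and let G be a simple graph on vertex set Fin n with edge set E(G) and m := |E(G)|. Define the table T : Fin n' → E(G) → ℕ by: for rows i < n, T(i)(e) = i + 1 if vertex i is an endpoint of e and T(i)(e) = 0 otherwise; for rows n ≤ i < n', T(i)(e) = i + 1 for all e. Then G contains a clique with exactly n/2 vertices if and only if the rows of T admit a partition all of whose blocks have size at least n/2 (= c·n') and whose cost is at most n'·m − (n/2)·C(n/2, 2), where C(n/2, 2) = (n/2)·(n/2 − 1)/2. -/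
/-!
Every nonzero entry of the table identifies its row within its column, so a block `B` of at
least two rows agrees exactly on the columns that vanish on all of `B`; writing `z(B)` for their
number, a partition into such blocks costs `n' m - ∑ |B| z(B)`. A block containing a dummy row
`i ≥ n` has `z(B) = 0`, while a block of vertex rows has `z(B)` equal to the number of edges
among the `t = n - |B|` vertices it misses, at most `C(t, 2)`.

Blocks have at least `k = n / 2` rows and `n' < 3k`, so there are at most two of them, one
holding the dummy row `n`. The cost bound therefore leaves one block of vertex rows with
`k C(k, 2) ≤ (2k - t) C(t, 2)` and `t ≤ k`, which forces `t = k` and the missed vertices to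
span `C(k, 2)` edges, i.e. to form a `k`-clique. Conversely, a `k`-clique `s` yields the
partition into the rows of the vertices outside `s` and all remaining rows.
-/

open Finset

attribute [local instance] Classical.propDecidable

section Suppression

variable {N : ℕ} {ι α : Type*}

lemma forall_agree_iff_forall_eq {T : Fin N → ι → α} {z : α} {j : ι}
    (hT : Set.InjOn (T · j) {i | T i j ≠ z}) {B : Finset (Fin N)} (hB : 2 ≤ #B) :
    (∀ i ∈ B, ∀ i' ∈ B, T i j = T i' j) ↔ ∀ i ∈ B, T i j = z := by
  refine ⟨fun h i hi => ?_, fun h i hi i' hi' => by rw [h i hi, h i' hi']⟩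
  by_contra hz
  obtain ⟨i', hi', hne⟩ := exists_mem_ne (by omega : 1 < #B) i
  have hz' : T i' j ≠ z := h i hi i' hi' ▸ hz
  exact hne (hT hz' hz (h i hi i' hi').symm)

variable [Fintype ι]

noncomputable def zeroCols (T : Fin N → ι → α) (z : α) (B : Finset (Fin N)) : Finset ι :=
  {j | ∀ i ∈ B, T i j = z}

lemma suppCost_add_card_mul_card_zeroCols {T : Fin N → ι → α} {z : α}
    (hT : ∀ j, Set.InjOn (T · j) {i | T i j ≠ z}) {B : Finset (Fin N)} (hB : 2 ≤ #B) :
    suppCost T B + #B * #(zeroCols T z B) = #B * Fintype.card ι := by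
  rw [suppCost, zeroCols, ← mul_add,
    filter_congr fun j _ => not_congr (forall_agree_iff_forall_eq (hT j) hB),
    add_comm, card_filter_add_card_filter_not, card_univ]

lemma IsRowPartition.sum_card_s9 {P : Finset (Finset (Fin N))} (hP : IsRowPartition P) :
    ∑ B ∈ P, #B = N := by
  have hcover : P.biUnion id = univ :=
    eq_univ_of_forall fun i => by simpa using hP.2.2 i
  calc ∑ B ∈ P, #B = #(P.biUnion id) := (card_biUnion hP.2.1).symm
    _ = N := by rw [hcover, card_univ, Fintype.card_fin]

lemma partCost_add_sum_card_mul_card_zeroCols {T : Fin N → ι → α} {z : α}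
    (hT : ∀ j, Set.InjOn (T · j) {i | T i j ≠ z}) {P : Finset (Finset (Fin N))}
    (hP : IsRowPartition P) (hP2 : ∀ B ∈ P, 2 ≤ #B) :
    partCost T P + ∑ B ∈ P, #B * #(zeroCols T z B) = N * Fintype.card ι := by
  rw [partCost, ← sum_add_distrib,
    sum_congr rfl fun B hB => suppCost_add_card_mul_card_zeroCols hT (hP2 B hB), ← sum_mul,
    hP.sum_card_s9]

lemma isRowPartition_pair_s9 {A : Finset (Fin N)} (hA : A.Nonempty) (hAc : Aᶜ.Nonempty) :
    IsRowPartition {A, Aᶜ} := by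
  refine ⟨by simp [hA, hAc], ?_, fun i => ?_⟩
  · simp only [mem_insert, mem_singleton]
    rintro B (rfl | rfl) B' (rfl | rfl) hne
    · exact absurd rfl hne
    · exact disjoint_compl_right
    · exact disjoint_compl_left
    · exact absurd rfl hne
  · by_cases hi : i ∈ A
    · exact ⟨A, by simp, hi⟩
    · exact ⟨Aᶜ, by simp, by simpa using hi⟩

end Suppression

lemma two_mul_sub_mul_choose_two_lt {k t : ℕ} (hk : 2 ≤ k) (ht : t < k) :
    (2 * k - t) * t.choose 2 < k * k.choose 2 := by
  have hk' : (2 : ℚ) ≤ k := by exact_mod_cast hk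
  have ht' : (t : ℚ) + 1 ≤ k := by exact_mod_cast ht
  have ht0 : (0 : ℚ) ≤ t := t.cast_nonneg
  suffices ((2 * k - t : ℕ) : ℚ) * (t.choose 2 : ℕ) < (k : ℚ) * (k.choose 2 : ℕ) by
    exact_mod_cast this
  rw [Nat.cast_sub (by omega), Nat.cast_choose_two, Nat.cast_choose_two]
  push_cast
  have hpos : (0 : ℚ) < k * k + (k - t) * t - (k - t) := by
    nlinarith [mul_nonneg (by linarith : (0 : ℚ) ≤ k - t) ht0]
  nlinarith [mul_pos (by linarith : (0 : ℚ) < k - t) hpos]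

namespace SimpleGraph

variable {V : Type*} [Fintype V] [DecidableEq V] (G : SimpleGraph V) [DecidableRel G.Adj]

noncomputable def edgesWithin (s : Finset V) : Finset G.edgeFinset :=
  {e | ∀ v ∈ (e : Sym2 V), v ∈ s}

lemma map_edgesWithin_subset (s : Finset V) :
    (G.edgesWithin s).map (Function.Embedding.subtype _) ⊆ s.offDiag.image Sym2.mk.uncurry := by
  intro e he
  simp only [edgesWithin, mem_map, mem_filter, mem_univ, true_and,
    Function.Embedding.coe_subtype] at he
  obtain ⟨⟨e, he⟩, hs, rfl⟩ := he
  induction e using Sym2.ind with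
  | _ a b =>
    have hab : G.Adj a b := by simpa using he
    exact mem_image.2 ⟨(a, b), mem_offDiag.2 ⟨hs a (by simp), hs b (by simp), hab.ne⟩, rfl⟩

lemma isClique_iff_map_edgesWithin_eq (s : Finset V) :
    G.IsClique s ↔
      (G.edgesWithin s).map (Function.Embedding.subtype _) = s.offDiag.image Sym2.mk.uncurry := by
  refine ⟨fun hs => (G.map_edgesWithin_subset s).antisymm ?_, fun h a ha b hb hab => ?_⟩
  · simp only [subset_iff, mem_image, mem_offDiag, Prod.exists, Function.uncurry_apply_pair,
      mem_map, Function.Embedding.coe_subtype]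
    rintro _ ⟨a, b, ⟨ha, hb, hab⟩, rfl⟩
    refine ⟨⟨s(a, b), by simpa using hs ha hb hab⟩, ?_, rfl⟩
    simp only [edgesWithin, mem_filter, mem_univ, true_and, Sym2.mem_iff]
    rintro v (rfl | rfl) <;> assumption
  · have hmem : s(a, b) ∈ (G.edgesWithin s).map (Function.Embedding.subtype _) :=
      h ▸ mem_image.2 ⟨(a, b), mem_offDiag.2 ⟨ha, hb, hab⟩, rfl⟩
    obtain ⟨e, -, he⟩ := mem_map.1 hmem
    rw [← G.mem_edgeSet, ← he]
    exact G.mem_edgeFinset.1 e.2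

lemma card_edgesWithin_le (s : Finset V) : #(G.edgesWithin s) ≤ (#s).choose 2 := by
  rw [← Sym2.card_image_offDiag, ← card_map (Function.Embedding.subtype _)]
  exact card_le_card (G.map_edgesWithin_subset s)

lemma isClique_iff_card_edgesWithin (s : Finset V) :
    G.IsClique s ↔ #(G.edgesWithin s) = (#s).choose 2 := by
  rw [isClique_iff_map_edgesWithin_eq, ← Sym2.card_image_offDiag,
    ← card_map (Function.Embedding.subtype _)]
  exact ⟨fun h => h ▸ rfl,
    eq_of_subset_of_card_le (G.map_edgesWithin_subset s) ∘ le_of_eq ∘ Eq.symm⟩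

lemma isNClique_compl_of_le_card_mul_card_edgesWithin {k : ℕ} (hV : Fintype.card V = 2 * k)
    (hk : 2 ≤ k) {S : Finset V} (hSk : k ≤ #S)
    (h : k * k.choose 2 ≤ #S * #(G.edgesWithin Sᶜ)) : G.IsNClique k Sᶜ := by
  have hS : #S + #Sᶜ = 2 * k := by rw [card_add_card_compl, hV]
  have hedges := G.card_edgesWithin_le Sᶜ
  have hSck : #Sᶜ = k := by
    by_contra hne
    have hlt := two_mul_sub_mul_choose_two_lt hk (t := #Sᶜ) (by omega)
    have : #S * #(G.edgesWithin Sᶜ) ≤ #S * (#Sᶜ).choose 2 := Nat.mul_le_mul_left _ hedges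
    rw [show #S = 2 * k - #Sᶜ by omega] at this h
    omega
  refine ⟨(G.isClique_iff_card_edgesWithin Sᶜ).2 ?_, hSck⟩
  rw [show #S = k by omega] at h
  rw [hSck] at hedges ⊢
  exact hedges.antisymm (Nat.le_of_mul_le_mul_left h (by omega))

end SimpleGraph

section CliqueTable

variable {n : ℕ} (G : SimpleGraph (Fin n)) [DecidableRel G.Adj] (n' : ℕ)

def cliqueTable : Fin n' → G.edgeFinset → ℕ := fun i e =>
  if h : (i : ℕ) < n then
    (if (⟨(i : ℕ), h⟩ : Fin n) ∈ (e : Sym2 (Fin n)) then (i : ℕ) + 1 else 0)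
  else (i : ℕ) + 1

variable {G n'}

lemma cliqueTable_eq_zero_iff {i : Fin n'} {e : G.edgeFinset} :
    cliqueTable G n' i e = 0 ↔
      ∃ h : (i : ℕ) < n, (⟨i, h⟩ : Fin n) ∉ (e : Sym2 (Fin n)) := by
  unfold cliqueTable
  split_ifs <;> simp_all

lemma cliqueTable_eq_zero_or (i : Fin n') (e : G.edgeFinset) :
    cliqueTable G n' i e = 0 ∨ cliqueTable G n' i e = i + 1 := by
  unfold cliqueTable
  split_ifs <;> simp

lemma injOn_cliqueTable (e : G.edgeFinset) :
    Set.InjOn (cliqueTable G n' · e) {i | cliqueTable G n' i e ≠ 0} := by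
  intro i hi i' hi' h
  have hval := (cliqueTable_eq_zero_or i e).resolve_left hi
  have hval' := (cliqueTable_eq_zero_or i' e).resolve_left hi'
  exact Fin.ext (by simp only at h; omega)

lemma zeroCols_cliqueTable_eq_empty {B : Finset (Fin n')} {i : Fin n'} (hi : i ∈ B)
    (hni : n ≤ i) : zeroCols (cliqueTable G n') 0 B = ∅ := by
  refine eq_empty_of_forall_notMem fun e he => ?_
  simp only [zeroCols, mem_filter, mem_univ, true_and] at he
  obtain ⟨h, -⟩ := cliqueTable_eq_zero_iff.1 (he i hi)
  omega

lemma zeroCols_cliqueTable_map (hle : n ≤ n') (S : Finset (Fin n)) :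
    zeroCols (cliqueTable G n') 0 (S.map (Fin.castLEEmb hle)) = G.edgesWithin Sᶜ := by
  ext e
  simp only [zeroCols, SimpleGraph.edgesWithin, mem_filter, mem_univ, true_and, forall_mem_map,
    cliqueTable_eq_zero_iff, mem_compl]
  exact ⟨fun h v hv hvS => (h v hvS).2 hv, fun h v hvS => ⟨v.2, fun hv => h v hv hvS⟩⟩

lemma exists_eq_map_of_zeroCols_cliqueTable_nonempty (hle : n ≤ n') {B : Finset (Fin n')}
    (hB : (zeroCols (cliqueTable G n') 0 B).Nonempty) :
    ∃ S : Finset (Fin n), B = S.map (Fin.castLEEmb hle) := by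
  have hreal : ∀ i ∈ B, (i : ℕ) < n := fun i hi => by
    by_contra! hni
    simp [zeroCols_cliqueTable_eq_empty hi hni] at hB
  obtain ⟨S, -, hS⟩ := (subset_map_iff (f := Fin.castLEEmb hle) (t := univ)).1 fun i hi =>
    mem_map.2 ⟨⟨i, hreal i hi⟩, mem_univ _, Fin.ext rfl⟩
  exact ⟨S, hS⟩

end CliqueTable

section Reduction

variable {n n' k : ℕ} (G : SimpleGraph (Fin n)) [DecidableRel G.Adj]

lemma exists_partition_of_isNClique (hn : n = 2 * k) (hk : 2 ≤ k) (hnn' : n < n')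
    {s : Finset (Fin n)} (hs : G.IsNClique k s) :
    ∃ P : Finset (Finset (Fin n')), IsRowPartition P ∧ (∀ B ∈ P, k ≤ #B) ∧
      partCost (cliqueTable G n') P + k * k.choose 2 = n' * #G.edgeFinset := by
  set A := sᶜ.map (Fin.castLEEmb hnn'.le)
  have hA : #A = k := by rw [card_map, card_compl, Fintype.card_fin, hs.card_eq]; omega
  have hdummy : (⟨n, hnn'⟩ : Fin n') ∈ Aᶜ := by
    simp only [A, mem_compl, mem_map, not_exists, not_and]
    exact fun v _ hv => v.2.ne (congrArg Fin.val hv)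
  have hAc : #Aᶜ = n' - k := by rw [card_compl, Fintype.card_fin, hA]
  have hAAc : A ≠ Aᶜ := fun h => mem_compl.1 hdummy (h ▸ hdummy)
  have hsize : ∀ B ∈ ({A, Aᶜ} : Finset _), k ≤ #B := by
    simp only [mem_insert, mem_singleton]
    rintro B (rfl | rfl) <;> omega
  have hpart := isRowPartition_pair_s9 (card_pos.1 (by omega)) ⟨_, hdummy⟩
  refine ⟨{A, Aᶜ}, hpart, hsize, ?_⟩
  have hcost := partCost_add_sum_card_mul_card_zeroCols (injOn_cliqueTable (G := G)) hpart
    fun B hB => hk.trans (hsize B hB)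
  rwa [sum_pair hAAc, zeroCols_cliqueTable_map, compl_compl,
    (G.isClique_iff_card_edgesWithin s).1 hs.isClique, hs.card_eq, hA,
    zeroCols_cliqueTable_eq_empty hdummy le_rfl, card_empty, mul_zero, add_zero,
    Fintype.card_coe] at hcost

lemma exists_le_card_mul_card_zeroCols (hnn' : n < n') (hn'k : n' < 3 * k)
    {P : Finset (Finset (Fin n'))} (hP : IsRowPartition P) (hPk : ∀ B ∈ P, k ≤ #B) {a : ℕ}
    (ha : 0 < a) (hsum : a ≤ ∑ B ∈ P, #B * #(zeroCols (cliqueTable G n') 0 B)) :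
    ∃ B₀ ∈ P, a ≤ #B₀ * #(zeroCols (cliqueTable G n') 0 B₀) := by
  -- the block of the dummy row `n` has no zero column, and there is at most one other block
  obtain ⟨Bd, hBd, hdBd⟩ := hP.2.2 ⟨n, hnn'⟩
  rw [← sum_erase P (by rw [zeroCols_cliqueTable_eq_empty hdBd le_rfl, card_empty, mul_zero])]
    at hsum
  have hPcard : #P < 3 := by
    have := card_nsmul_le_sum P card k hPk
    rw [hP.sum_card_s9, smul_eq_mul] at this
    exact Nat.lt_of_mul_lt_mul_right (this.trans_lt hn'k)
  obtain ⟨B₀, hB₀⟩ := card_le_one_iff_subset_singleton.1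
    (show #(P.erase Bd) ≤ 1 by rw [card_erase_of_mem hBd]; omega)
  obtain h | h := subset_singleton_iff.1 hB₀
  · rw [h, sum_empty] at hsum
    omega
  rw [h, sum_singleton] at hsum
  exact ⟨B₀, mem_of_mem_erase (h ▸ mem_singleton_self B₀), hsum⟩

lemma exists_isNClique_of_partition (hn : n = 2 * k) (hk : 2 ≤ k) (hnn' : n < n')
    (hn'k : n' < 3 * k) {P : Finset (Finset (Fin n'))} (hP : IsRowPartition P)
    (hPk : ∀ B ∈ P, k ≤ #B)
    (hcost : partCost (cliqueTable G n') P + k * k.choose 2 ≤ n' * #G.edgeFinset) :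
    ∃ s : Finset (Fin n), G.IsNClique k s := by
  have hid := partCost_add_sum_card_mul_card_zeroCols (z := 0) (injOn_cliqueTable (G := G)) hP
    fun B hB => hk.trans (hPk B hB)
  rw [Fintype.card_coe] at hid
  have hCpos : 0 < k * k.choose 2 := Nat.mul_pos (by omega) (Nat.choose_pos hk)
  obtain ⟨B₀, hB₀P, hB₀⟩ :=
    exists_le_card_mul_card_zeroCols G hnn' hn'k hP hPk hCpos (by omega)
  obtain ⟨S, rfl⟩ := exists_eq_map_of_zeroCols_cliqueTable_nonempty hnn'.le
    (card_pos.1 (Nat.pos_of_mul_pos_left (hCpos.trans_le hB₀)))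
  have hSk := hPk _ hB₀P
  rw [zeroCols_cliqueTable_map, card_map] at hB₀
  rw [card_map] at hSk
  exact ⟨Sᶜ, G.isNClique_compl_of_le_card_mul_card_edgesWithin
    (by rw [Fintype.card_fin, hn]) hk hSk hB₀⟩

end Reduction

theorem stmt9_general (n n' : ℕ) (hn : 4 ≤ n) (hev : Even n)
    (c : ℚ) (hc1 : 1 / 3 < c)
    (hn' : (n' : ℚ) = (n : ℚ) / (2 * c)) (hn'2 : n + 2 ≤ n')
    (G : SimpleGraph (Fin n)) [DecidableRel G.Adj] :
    (∃ s : Finset (Fin n), G.IsNClique (n / 2) s) ↔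
    (∃ P : Finset (Finset (Fin n')), IsRowPartition P ∧
      (∀ B ∈ P, n / 2 ≤ B.card) ∧
      (partCost
          (fun (i : Fin n') (e : G.edgeFinset) =>
            if h : (i : ℕ) < n then
              (if (⟨(i : ℕ), h⟩ : Fin n) ∈ (e : Sym2 (Fin n)) then (i : ℕ) + 1 else 0)
            else (i : ℕ) + 1) P : ℤ)
        ≤ (n' : ℤ) * (G.edgeFinset.card : ℤ)
            - ((n / 2 : ℕ) : ℤ) * ((((n / 2) * (n / 2 - 1) / 2 : ℕ)) : ℤ)) := by
  obtain ⟨k, hk⟩ : ∃ k, n = 2 * k := hev.exists_two_nsmul _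
  have hn'k : n' < 3 * k := by
    have hnn' : (n : ℚ) = n' * (2 * c) := by
      rw [hn', div_mul_cancel₀ _ (by positivity)]
    have : (2 * n' : ℚ) < 3 * n := by
      rw [hnn']
      nlinarith [(by exact_mod_cast (by omega : 0 < n') : (0 : ℚ) < n')]
    have : 2 * n' < 3 * n := by exact_mod_cast this
    omega
  rw [show n / 2 = k by omega, ← Nat.choose_two_right]
  change _ ↔ ∃ P, IsRowPartition P ∧ (∀ B ∈ P, k ≤ #B) ∧
    (partCost (cliqueTable G n') P : ℤ) ≤ n' * #G.edgeFinset - k * k.choose 2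
  constructor
  · rintro ⟨s, hs⟩
    obtain ⟨P, hP, hPk, hcost⟩ :=
      exists_partition_of_isNClique G (n' := n') hk (by omega) (by omega) hs
    exact ⟨P, hP, hPk, by rw [← Nat.cast_mul, ← hcost]; push_cast; linarith⟩
  · rintro ⟨P, hP, hPk, hcost⟩
    exact exists_isNClique_of_partition G hk (by omega) (by omega) hn'k hP hPk (by zify; linarith)

theorem stmt9 (n n' : ℕ) (hn : 4 ≤ n) (hev : Even n)
    (c : ℚ) (hc1 : 1 / 3 < c) (hc2 : c < 1 / 2)
    (hn' : (n' : ℚ) = (n : ℚ) / (2 * c)) (hn'2 : n + 2 ≤ n')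
    (G : SimpleGraph (Fin n)) [DecidableRel G.Adj] :
    (∃ s : Finset (Fin n), G.IsNClique (n / 2) s) ↔
    (∃ P : Finset (Finset (Fin n')), IsRowPartition P ∧
      (∀ B ∈ P, n / 2 ≤ B.card) ∧
      (partCost
          (fun (i : Fin n') (e : G.edgeFinset) =>
            if h : (i : ℕ) < n then
              (if (⟨(i : ℕ), h⟩ : Fin n) ∈ (e : Sym2 (Fin n)) then (i : ℕ) + 1 else 0)
            else (i : ℕ) + 1) P : ℤ)
        ≤ (n' : ℤ) * (G.edgeFinset.card : ℤ)
            - ((n / 2 : ℕ) : ℤ) * ((((n / 2) * (n / 2 - 1) / 2 : ℕ)) : ℤ)) :=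
  stmt9_general n n' hn hev c hc1 hn' hn'2 G
end

section
/- Let S be a finite set with |S| = n, and let P be a partition of S into pairwise disjoint nonempty blocks each of size at most n/2 (i.e., 2·|B| ≤ n for every block B). Then there exists a subfamily A ⊆ P of blocks such that n ≤ 4·∑_{B ∈ A} |B| and 4·∑_{B ∈ A} |B| ≤ 3n. -/
/-!
Among the subfamilies of total size at least `n / 4`, take one with fewest blocks. Dropping any
block from it brings the total below `n / 4`, and that block has size at most `n / 2`, so the
total is at most `3n / 4`. Such subfamilies exist because the blocks cover `S`.
-/

open Finset

theorem Finset.exists_subset_le_sum_le_add {ι M : Type*} [AddCommMonoid M] [LinearOrder M]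
    [IsOrderedCancelAddMonoid M] [CanonicallyOrderedAdd M] (P : Finset ι) (w : ι → M) (t c : M)
    (ht : t ≤ ∑ i ∈ P, w i) (hw : ∀ i ∈ P, w i ≤ c) :
    ∃ A ⊆ P, t ≤ ∑ i ∈ A, w i ∧ ∑ i ∈ A, w i ≤ t + c := by
  classical
  obtain ⟨A, hA, hmin⟩ := exists_min_image (P.powerset.filter fun A => t ≤ ∑ i ∈ A, w i) card
    ⟨P, mem_filter.2 ⟨mem_powerset_self P, ht⟩⟩
  obtain ⟨hAP, htA⟩ := mem_filter.1 hA
  rw [mem_powerset] at hAP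
  refine ⟨A, hAP, htA, ?_⟩
  rcases A.eq_empty_or_nonempty with rfl | ⟨i, hi⟩
  · simp
  have herase : ∑ j ∈ A.erase i, w j < t := by
    by_contra! h
    have := hmin _ (mem_filter.2 ⟨mem_powerset.2 ((erase_subset i A).trans hAP), h⟩)
    exact (card_erase_lt_of_mem hi).not_ge this
  calc ∑ j ∈ A, w j = ∑ j ∈ A.erase i, w j + w i := (sum_erase_add A w hi).symm
    _ ≤ t + c := add_le_add herase.le (hw i (hAP hi))

theorem Finset.card_le_sum_card_of_subset_biUnion {α : Type*} [DecidableEq α] {S : Finset α}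
    {P : Finset (Finset α)} (hcover : ∀ a ∈ S, ∃ B ∈ P, a ∈ B) : #S ≤ ∑ B ∈ P, #B :=
  calc #S ≤ #(P.biUnion id) := card_le_card fun a ha => by simpa using hcover a ha
    _ ≤ ∑ B ∈ P, #B := card_biUnion_le

theorem stmt13_general {α : Type*} [DecidableEq α] (S : Finset α) (n : ℕ) (hn : S.card = n)
    (P : Finset (Finset α))
    (hcover : ∀ a ∈ S, ∃ B ∈ P, a ∈ B)
    (hsize : ∀ B ∈ P, 2 * B.card ≤ n) :
    ∃ A ⊆ P, n ≤ 4 * ∑ B ∈ A, B.card ∧ 4 * ∑ B ∈ A, B.card ≤ 3 * n := by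
  have htotal : n ≤ ∑ B ∈ P, 4 * #B := by
    rw [← mul_sum, ← hn]
    have := card_le_sum_card_of_subset_biUnion hcover
    omega
  obtain ⟨A, hAP, hlow, hhigh⟩ := exists_subset_le_sum_le_add P (fun B => 4 * #B) n (2 * n)
    htotal fun B hB => by have := hsize B hB; omega
  rw [← mul_sum] at hlow hhigh
  exact ⟨A, hAP, hlow, by omega⟩

theorem stmt13 {α : Type*} [DecidableEq α] (S : Finset α) (n : ℕ) (hn : S.card = n)
    (P : Finset (Finset α))
    (hne : ∀ B ∈ P, B.Nonempty)
    (hdis : ∀ B ∈ P, ∀ B' ∈ P, B ≠ B' → Disjoint B B')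
    (hsub : ∀ B ∈ P, B ⊆ S)
    (hcover : ∀ a ∈ S, ∃ B ∈ P, a ∈ B)
    (hsize : ∀ B ∈ P, 2 * B.card ≤ n) :
    ∃ A ⊆ P, n ≤ 4 * ∑ B ∈ A, B.card ∧ 4 * ∑ B ∈ A, B.card ≤ 3 * n :=
  stmt13_general S n hn P hcover hsize
end

section
/- Let T : Fin n → Fin m → Σ be a table and k ≥ 1. Then every k-anonymous partition P of the rows of T satisfies cost(P) ≥ |{i ∈ Fin n : |class(i)| < k}|. -/
open Finset

attribute [local instance] Classical.propDecidable

/-- The duplicate class of row `i`: all rows identical to row `i`. -/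
noncomputable def cls {n m : ℕ} {σ : Type*} (T : Fin n → Fin m → σ) (i : Fin n) :
    Finset (Fin n) :=
  Finset.univ.filter (fun i' => ∀ j, T i' j = T i j)

/-! If a block `B` with `k ≤ |B|` contains a row `i` whose duplicate class has fewer than `k`
rows, then `B` is not contained in `class(i)`, so some column is suppressed in `B` and
`cost(B) ≥ |B|`; in particular `cost(B)` bounds the number of such rows of `B`. Summing over
the blocks of a partition gives the theorem. -/

section SuppressionCost

variable {n m : ℕ} {σ : Type*} (T : Fin n → Fin m → σ)

lemma subset_cls_of_forall_eq {B : Finset (Fin n)} {i : Fin n} (hi : i ∈ B)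
    (h : ∀ j, ∀ i₁ ∈ B, ∀ i₂ ∈ B, T i₁ j = T i₂ j) : B ⊆ cls T i := fun i' hi' => by
  simp only [cls, mem_filter, mem_univ, true_and]
  exact fun j => h j i' hi' i hi

lemma card_le_suppCost_of_card_cls_lt {B : Finset (Fin n)} {i : Fin n} (hi : i ∈ B)
    (hlt : (cls T i).card < B.card) : B.card ≤ suppCost T B := by
  have hsupp : (univ.filter fun j : Fin m => ¬ ∀ i ∈ B, ∀ i' ∈ B, T i j = T i' j).Nonempty := by
    by_contra hempty
    rw [not_nonempty_iff_eq_empty, filter_eq_empty_iff] at hempty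
    have hsub := subset_cls_of_forall_eq T hi fun j => not_not.mp (hempty (mem_univ j))
    exact (card_le_card hsub).not_gt hlt
  exact Nat.le_mul_of_pos_right _ hsupp.card_pos

lemma card_filter_card_cls_lt_le_suppCost {k : ℕ} {B : Finset (Fin n)} (hB : k ≤ B.card) :
    (B.filter fun i => (cls T i).card < k).card ≤ suppCost T B := by
  rcases (B.filter fun i => (cls T i).card < k).eq_empty_or_nonempty with h | ⟨i, hi⟩
  · simp [h]
  · rw [mem_filter] at hi
    exact (card_filter_le _ _).trans (card_le_suppCost_of_card_cls_lt T hi.1 (hi.2.trans_le hB))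

end SuppressionCost

theorem stmt14_general {σ : Type*} (n m k : ℕ) (T : Fin n → Fin m → σ)
    (P : Finset (Finset (Fin n))) (hP : IsRowPartition P)
    (hanon : ∀ B ∈ P, k ≤ B.card) :
    (Finset.univ.filter (fun i : Fin n => (cls T i).card < k)).card ≤ partCost T P := by
  obtain ⟨-, -, hcover⟩ := hP
  set p : Fin n → Prop := fun i => (cls T i).card < k
  calc (univ.filter p).card
      ≤ (P.biUnion fun B => B.filter p).card := card_le_card fun i hi => by
        obtain ⟨B, hB, hiB⟩ := hcover i
        exact mem_biUnion.2 ⟨B, hB, mem_filter.2 ⟨hiB, (mem_filter.1 hi).2⟩⟩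
    _ ≤ ∑ B ∈ P, (B.filter p).card := card_biUnion_le
    _ ≤ partCost T P := sum_le_sum fun B hB => card_filter_card_cls_lt_le_suppCost T (hanon B hB)

theorem stmt14 {σ : Type*} (n m k : ℕ) (hk : 1 ≤ k) (T : Fin n → Fin m → σ)
    (P : Finset (Finset (Fin n))) (hP : IsRowPartition P)
    (hanon : ∀ B ∈ P, k ≤ B.card) :
    (Finset.univ.filter (fun i : Fin n => (cls T i).card < k)).card ≤ partCost T P :=
  stmt14_general n m k T P hP hanon
end

section
/- Let T : Fin n → Fin m → Σ be a table and k ≥ 1. If some row i of T has duplicate class class(i) of size strictly less than k, then every k-anonymous partition of the rows of T has cost at least k. -/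
open Finset

attribute [local instance] Classical.propDecidable

section

variable {n : ℕ} {ι α : Type*} [Fintype ι] (T : Fin n → ι → α)

theorem card_le_suppCost {B : Finset (Fin n)} {a b : Fin n} (ha : a ∈ B) (hb : b ∈ B)
    (hab : T a ≠ T b) : B.card ≤ suppCost T B := by
  obtain ⟨j, hj⟩ := Function.ne_iff.mp hab
  have hsupp : 0 < (univ.filter fun j : ι => ¬ ∀ i ∈ B, ∀ i' ∈ B, T i j = T i' j).card :=
    card_pos.mpr ⟨j, mem_filter.mpr ⟨mem_univ j, fun h => hj (h a ha b hb)⟩⟩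
  exact Nat.le_mul_of_pos_right _ hsupp

theorem suppCost_le_partCost {P : Finset (Finset (Fin n))} {B : Finset (Fin n)} (hB : B ∈ P) :
    suppCost T B ≤ partCost T P :=
  single_le_sum (fun _ _ => Nat.zero_le _) hB

end

theorem mem_cls {n m : ℕ} {σ : Type*} {T : Fin n → Fin m → σ} {i i' : Fin n} :
    i' ∈ cls T i ↔ T i' = T i := by
  simp [cls, funext_iff]

theorem exists_mem_ne_of_card_cls_lt {n m : ℕ} {σ : Type*} {T : Fin n → Fin m → σ} {i : Fin n}
    {B : Finset (Fin n)} (hB : (cls T i).card < B.card) : ∃ i' ∈ B, T i' ≠ T i := by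
  obtain ⟨i', hi'B, hi'⟩ := not_subset.mp fun hsub => (card_le_card hsub).not_gt hB
  exact ⟨i', hi'B, fun h => hi' (mem_cls.mpr h)⟩

theorem stmt15_general {σ : Type*} (n m k : ℕ) (T : Fin n → Fin m → σ)
    (i : Fin n) (hi : (cls T i).card < k)
    (P : Finset (Finset (Fin n))) (hP : IsRowPartition P)
    (hanon : ∀ B ∈ P, k ≤ B.card) :
    k ≤ partCost T P := by
  obtain ⟨B, hBP, hiB⟩ := hP.2.2 i
  obtain ⟨i', hi'B, hi'⟩ := exists_mem_ne_of_card_cls_lt (hi.trans_le (hanon B hBP))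
  calc k ≤ B.card := hanon B hBP
    _ ≤ suppCost T B := card_le_suppCost T hi'B hiB hi'
    _ ≤ partCost T P := suppCost_le_partCost T hBP

theorem stmt15 {σ : Type*} (n m k : ℕ) (hk : 1 ≤ k) (T : Fin n → Fin m → σ)
    (i : Fin n) (hi : (cls T i).card < k)
    (P : Finset (Finset (Fin n))) (hP : IsRowPartition P)
    (hanon : ∀ B ∈ P, k ≤ B.card) :
    k ≤ partCost T P :=
  stmt15_general n m k T i hi P hP hanon
end

section
/- Let M be a finite multiset over a type α with |M| ≥ 2 such that every element occurs in M with multiplicity at most |M|/2 (i.e., 2·count(a, M) ≤ |M| for every a : α). Then M can be written as a sum of finitely many multisets, each of which has cardinality 2 or 3 and contains no repeated element (is Nodup). -/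
/-!
Induct on `|M|`. A multiset of size at most 3 with all multiplicities at most half its size is
already Nodup. Otherwise take a most frequent value `a` and a most frequent value `b ≠ a`, and split
off the pair `{a, b}`. For any other value `x` we have `count x ≤ count b ≤ count a` and
`count a + count b + count x ≤ |M|`, so `2 · count x ≤ |M| - 2` once `|M| ≥ 4`: the remainder
again has all multiplicities at most half its size.
-/

namespace Multiset

variable {α : Type*} [DecidableEq α]

theorem sum_count_le_card (s : Finset α) (M : Multiset α) : ∑ x ∈ s, M.count x ≤ card M :=
  calc ∑ x ∈ s, M.count x ≤ ∑ x ∈ s ∪ M.toFinset, M.count x :=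
        Finset.sum_le_sum_of_subset Finset.subset_union_left
    _ = card M := sum_count_eq_card fun x hx ↦ by simp [hx]

theorem count_add_count_add_count_le_card {a b c : α} (hab : a ≠ b) (hac : a ≠ c) (hbc : b ≠ c)
    (M : Multiset α) : M.count a + M.count b + M.count c ≤ card M := by
  simpa [Finset.sum_insert, hab, hac, hbc, add_assoc] using sum_count_le_card {a, b, c} M

theorem nodup_of_two_mul_count_le {M : Multiset α} (h3 : card M ≤ 3)
    (hM : ∀ x, 2 * M.count x ≤ card M) : M.Nodup :=
  nodup_iff_count_le_one.mpr fun x ↦ by have := hM x; omega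

theorem exists_mem_ne_of_two_mul_count_le {M : Multiset α} {a : α} (hM : M ≠ 0)
    (ha : 2 * M.count a ≤ card M) : ∃ b ∈ M, b ≠ a := by
  by_contra! h
  have : M.count a = card M := count_eq_card.mpr fun x hx ↦ (h x hx).symm
  have : card M ≠ 0 := by simpa using hM
  omega

theorem exists_max_count {M : Multiset α} (p : α → Prop) [DecidablePred p] {b : α} (hb : b ∈ M)
    (hpb : p b) : ∃ a ∈ M, p a ∧ ∀ c, p c → M.count c ≤ M.count a := by
  obtain ⟨a, ha, hmax⟩ := (M.toFinset.filter p).exists_max_image M.count ⟨b, by simp [hb, hpb]⟩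
  rw [Finset.mem_filter, mem_toFinset] at ha
  refine ⟨a, ha.1, ha.2, fun c hpc ↦ ?_⟩
  by_cases hc : c ∈ M
  · exact hmax c (by simp [hc, hpc])
  · simp [count_eq_zero_of_notMem hc]

theorem exists_eq_cons_cons_of_two_mul_count_le {M : Multiset α} (h4 : 4 ≤ card M)
    (hM : ∀ x, 2 * M.count x ≤ card M) :
    ∃ a b M', a ≠ b ∧ M = a ::ₘ b ::ₘ M' ∧ ∀ x, 2 * M'.count x ≤ card M' := by
  have h0 : M ≠ 0 := by rintro rfl; simp at h4
  obtain ⟨x₀, hx₀⟩ := exists_mem_of_ne_zero h0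
  obtain ⟨a, ha, -, hamax⟩ := exists_max_count (fun _ ↦ True) hx₀ trivial
  obtain ⟨b, hb, hba⟩ := exists_mem_ne_of_two_mul_count_le h0 (hM a)
  obtain ⟨b, hb, hba, hbmax⟩ := exists_max_count (· ≠ a) hb hba
  have hbM' : b ∈ M.erase a := (mem_erase_of_ne hba).mpr hb
  refine ⟨a, b, (M.erase a).erase b, hba.symm, by rw [cons_erase hbM', cons_erase ha], fun x ↦ ?_⟩
  rw [card_erase_of_mem hbM', card_erase_of_mem ha, Nat.pred_eq_sub_one, Nat.pred_eq_sub_one]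
  have hx := hM x
  by_cases hxa : x = a
  · subst hxa
    rw [count_erase_of_ne hba.symm, count_erase_self]
    omega
  by_cases hxb : x = b
  · subst hxb
    rw [count_erase_self, count_erase_of_ne hxa]
    omega
  rw [count_erase_of_ne hxb, count_erase_of_ne hxa]
  have := hamax x trivial
  have := hbmax x hxa
  have := count_add_count_add_count_le_card (Ne.symm hba) (Ne.symm hxa) (Ne.symm hxb) M
  omega

end Multiset

theorem stmt18 {α : Type*} [DecidableEq α] (M : Multiset α)
    (hcard : 2 ≤ Multiset.card M)
    (hdiv : ∀ a : α, 2 * M.count a ≤ Multiset.card M) :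
    ∃ L : List (Multiset α),
      (∀ N ∈ L, (Multiset.card N = 2 ∨ Multiset.card N = 3) ∧ N.Nodup) ∧
      M = L.sum := by
  induction hn : Multiset.card M using Nat.strong_induction_on generalizing M with
  | _ n ih =>
  subst hn
  by_cases h3 : Multiset.card M ≤ 3
  · refine ⟨[M], ?_, by simp⟩
    simpa using ⟨by omega, Multiset.nodup_of_two_mul_count_le h3 hdiv⟩
  obtain ⟨a, b, M', hab, rfl, hM'⟩ :=
    Multiset.exists_eq_cons_cons_of_two_mul_count_le (by omega) hdiv
  simp only [Multiset.card_cons] at hcard h3 ih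
  obtain ⟨L, hL, rfl⟩ := ih _ (by omega) M' (by omega) hM' rfl
  refine ⟨{a, b} :: L, ?_, by simp [Multiset.insert_eq_cons]⟩
  simpa [Multiset.insert_eq_cons, hab] using hL
end
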